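/- arXiv:1607.06444 — 6 statements merged into one kernel-verified Lean document; each statement's English description precedes it below -/
import Mathlib

section
/- If a graph G admits a straight-line drawing in ℝ² in which all edges are covered by k lines, then G has at most k(k-1)/2 vertices of degree at least 3. -/
/-- `L` is a line in `ℝ^d`. -/
def IsLine {d : ℕ} (L : Set (Fin d → ℝ)) : Prop :=
  ∃ p v : Fin d → ℝ, v ≠ 0 ∧ L = {x | ∃ t : ℝ, x = p + t • v}

/-- A `k`-line cover of a graph `G` in `ℝ^d`: a crossing-free straight-line drawing of
`G` together with `k` lines whose union contains the drawing (all vertices and edges). -/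
structure LineCover {V : Type*} (G : SimpleGraph V) (d k : ℕ) where
  pos : V → (Fin d → ℝ)
  inj : Function.Injective pos
  lines : Fin k → Set (Fin d → ℝ)
  isLine : ∀ i, IsLine (lines i)
  coversV : ∀ v, ∃ i, pos v ∈ lines i
  coversE : ∀ ⦃u v⦄, G.Adj u v → ∃ i, segment ℝ (pos u) (pos v) ⊆ lines i
  noCross : ∀ ⦃u v a b⦄, G.Adj u v → G.Adj a b → ({u, v} : Set V) ≠ {a, b} →
    ∀ x ∈ segment ℝ (pos u) (pos v) ∩ segment ℝ (pos a) (pos b),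
      ∃ w, (w = u ∨ w = v) ∧ (w = a ∨ w = b) ∧ x = pos w

/-- The line cover number `ρ¹_d(G)`: the minimum number of lines in `ℝ^d` whose union
contains a crossing-free straight-line drawing of `G`. -/
noncomputable def rho1 {V : Type*} (G : SimpleGraph V) (d : ℕ) : ℕ :=
  sInf {k | Nonempty (LineCover G d k)}

/-!
Let `w` be a vertex of degree at least 3. If all edges at `w` lay on one line, two neighbours
`a`, `b` would lie on the same side of `w`, say with `a` between `w` and `b`; then the point `a`
lies on both edges `wa` and `wb`, a crossing. So `w` lies on two distinct lines of the cover, and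
since two distinct lines meet at most once, `w ↦ {i, j}` is injective into the `k.choose 2`
unordered pairs of lines.
-/

section Geometry

variable {d : ℕ} {L L₁ L₂ : Set (Fin d → ℝ)}

theorem IsLine.collinear (hL : IsLine L) : Collinear ℝ L := by
  obtain ⟨p, v, -, rfl⟩ := hL
  refine (collinear_iff_exists_forall_eq_smul_vadd _).2 ⟨p, v, ?_⟩
  rintro x ⟨t, rfl⟩
  exact ⟨t, add_comm _ _⟩

theorem IsLine.exists_affineSubspace (hL : IsLine L) :
    ∃ A : AffineSubspace ℝ (Fin d → ℝ), (A : Set (Fin d → ℝ)) = L := by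
  obtain ⟨p, v, -, rfl⟩ := hL
  refine ⟨AffineSubspace.mk' p (ℝ ∙ v), Set.ext fun x => ?_⟩
  simp only [SetLike.mem_coe, AffineSubspace.mem_mk', vsub_eq_sub,
    Submodule.mem_span_singleton, Set.mem_ofPred_eq, eq_sub_iff_add_eq, eq_comm (a := x),
    add_comm p]

theorem IsLine.subset_of_mem (hL₁ : IsLine L₁) (hL₂ : IsLine L₂) {x y : Fin d → ℝ} (hxy : x ≠ y)
    (hx₁ : x ∈ L₁) (hy₁ : y ∈ L₁) (hx₂ : x ∈ L₂) (hy₂ : y ∈ L₂) : L₁ ⊆ L₂ := by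
  obtain ⟨A, rfl⟩ := hL₂.exists_affineSubspace
  exact fun z hz => affineSpan_pair_le_of_mem_of_mem hx₂ hy₂
    (hL₁.collinear.mem_affineSpan_of_mem_of_ne hx₁ hy₁ hz hxy)

theorem IsLine.eq_of_mem_inter (hL₁ : IsLine L₁) (hL₂ : IsLine L₂) (hne : L₁ ≠ L₂)
    {x y : Fin d → ℝ} (hx : x ∈ L₁ ∩ L₂) (hy : y ∈ L₁ ∩ L₂) : x = y := by
  by_contra hxy
  exact hne ((hL₁.subset_of_mem hL₂ hxy hx.1 hy.1 hx.2 hy.2).antisymm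
    (hL₂.subset_of_mem hL₁ hxy hx.2 hy.2 hx.1 hy.1))

end Geometry

theorem wbtw_or_wbtw_smul_vadd_of_sameSign {R V P : Type*} [Field R] [LinearOrder R]
    [IsStrictOrderedRing R] [AddCommGroup V] [Module R V] [AddTorsor V P] (x : P) (v : V)
    {r₁ r₂ : R} (h : (0 ≤ r₁ ∧ 0 ≤ r₂) ∨ (r₁ ≤ 0 ∧ r₂ ≤ 0)) :
    Wbtw R x (r₁ • v +ᵥ x) (r₂ • v +ᵥ x) ∨ Wbtw R x (r₂ • v +ᵥ x) (r₁ • v +ᵥ x) := by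
  rcases h with ⟨h₁, h₂⟩ | ⟨h₁, h₂⟩
  · exact wbtw_or_wbtw_smul_vadd_of_nonneg x v h₁ h₂
  · simpa only [neg_smul_neg] using
      wbtw_or_wbtw_smul_vadd_of_nonneg x (-v) (neg_nonneg.2 h₁) (neg_nonneg.2 h₂)

namespace LineCover

variable {V : Type*} {G : SimpleGraph V} {d k : ℕ} (C : LineCover G d k)

theorem eq_of_wbtw {w a b : V} (ha : G.Adj w a) (hb : G.Adj w b)
    (h : Wbtw ℝ (C.pos w) (C.pos a) (C.pos b)) : a = b := by
  by_contra hab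
  have hpair : ({w, a} : Set V) ≠ {w, b} := by
    simp [Set.pair_eq_pair_iff, hab, ha.ne']
  obtain ⟨u, -, hu₂, hu⟩ :=
    C.noCross ha hb hpair (C.pos a) ⟨right_mem_segment ℝ _ _, h.mem_segment⟩
  obtain rfl := C.inj hu
  rcases hu₂ with rfl | rfl
  · exact ha.ne' rfl
  · exact hab rfl

theorem ncard_neighborSet_le_two_of_neighbors_mem_line {L : Set (Fin d → ℝ)} (hL : IsLine L)
    {w : V} (hw : C.pos w ∈ L) (hN : ∀ u, G.Adj w u → C.pos u ∈ L) :
    (G.neighborSet w).ncard ≤ 2 := by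
  -- parametrize the line from `C.pos w`; each side of `C.pos w` carries at most one neighbour
  obtain ⟨v, hv⟩ := (collinear_iff_of_mem hw).1 hL.collinear
  choose r hr using fun u : G.neighborSet w => hv _ (hN u u.2)
  have hside : Function.Injective fun u => decide (0 < r u) := by
    intro u₁ u₂ h
    have hsign : (0 ≤ r u₁ ∧ 0 ≤ r u₂) ∨ (r u₁ ≤ 0 ∧ r u₂ ≤ 0) := by
      simp only [decide_eq_decide] at h
      by_cases h₁ : 0 < r u₁
      · exact Or.inl ⟨h₁.le, (h.1 h₁).le⟩
      · exact Or.inr ⟨not_lt.1 h₁, not_lt.1 (mt h.2 h₁)⟩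
    apply Subtype.ext
    rcases wbtw_or_wbtw_smul_vadd_of_sameSign (C.pos w) v hsign with h' | h'
    · rw [← hr, ← hr] at h'
      exact C.eq_of_wbtw u₁.2 u₂.2 h'
    · rw [← hr, ← hr] at h'
      exact (C.eq_of_wbtw u₂.2 u₁.2 h').symm
  calc (G.neighborSet w).ncard = Nat.card (G.neighborSet w) := (Nat.card_coe_set_eq _).symm
    _ ≤ Nat.card Bool := Nat.card_le_card_of_injective _ hside
    _ = 2 := by simp

theorem exists_lines_ne_of_three_le_ncard {w : V} (hw : 3 ≤ (G.neighborSet w).ncard) :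
    ∃ i j, C.lines i ≠ C.lines j ∧ C.pos w ∈ C.lines i ∧ C.pos w ∈ C.lines j := by
  by_contra! h
  obtain ⟨a, ha⟩ := Set.nonempty_of_ncard_ne_zero (by omega : (G.neighborSet w).ncard ≠ 0)
  obtain ⟨i, hi⟩ := C.coversE ha
  have hN : ∀ u, G.Adj w u → C.pos u ∈ C.lines i := by
    intro u hu
    obtain ⟨j, hj⟩ := C.coversE hu
    by_contra hui
    exact h i j (fun hij => hui (hij ▸ hj (right_mem_segment ℝ _ _)))
      (hi (left_mem_segment ℝ _ _)) (hj (left_mem_segment ℝ _ _))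
  have := C.ncard_neighborSet_le_two_of_neighbors_mem_line (C.isLine i)
    (hi (left_mem_segment ℝ _ _)) hN
  omega

end LineCover

/-- If `G` admits a straight-line drawing in `ℝ²` covered by `k` lines, then `G` has at
most `k(k-1)/2` vertices of degree at least 3. -/
theorem stmt_3 {V : Type*} (G : SimpleGraph V) (k : ℕ)
    (h : Nonempty (LineCover G 2 k)) :
    {v : V | 3 ≤ (G.neighborSet v).ncard}.ncard ≤ k * (k - 1) / 2 := by
  obtain ⟨C⟩ := h
  set S := {v : V | 3 ≤ (G.neighborSet v).ncard}
  choose i j hij hi hj using fun v : S => C.exists_lines_ne_of_three_le_ncard v.2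
  let f : S → {e : Sym2 (Fin k) // ¬e.IsDiag} :=
    fun v => ⟨s(i v, j v), Sym2.mk_isDiag_iff.not.2 fun h => hij v (congrArg C.lines h)⟩
  have hf : Function.Injective f := by
    intro v₁ v₂ hv
    have hmem : ∀ l ∈ s(i v₁, j v₁), C.pos v₂ ∈ C.lines l := by
      rw [show s(i v₁, j v₁) = s(i v₂, j v₂) from congrArg Subtype.val hv]
      simpa [Sym2.mem_iff] using ⟨hi v₂, hj v₂⟩
    exact Subtype.ext <| C.inj <| (C.isLine _).eq_of_mem_inter (C.isLine _) (hij v₁)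
      ⟨hi v₁, hj v₁⟩ ⟨hmem _ (Sym2.mem_mk_left _ _), hmem _ (Sym2.mem_mk_right _ _)⟩
  calc S.ncard = Nat.card S := (Nat.card_coe_set_eq S).symm
    _ ≤ Nat.card {e : Sym2 (Fin k) // ¬e.IsDiag} := Nat.card_le_card_of_injective f hf
    _ = k.choose 2 := by
      rw [Nat.card_eq_fintype_card, Sym2.card_subtype_not_diag, Fintype.card_fin]
    _ = k * (k - 1) / 2 := Nat.choose_two_right k
end

section
/- If a graph G admits a straight-line drawing in ℝ² covered by k lines, then the number of edges of G incident to vertices of degree at least 3 is at most 2k(k-1) (at most 2(k-1) such edges lie on each line). -/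
/-!
At a vertex `u` on a line `L`, two neighbours on `L` lying on the same side of `u` cannot both
be joined to `u`: the nearer one would lie on the edge to the farther one, a crossing. So `u` has
at most two neighbours on `L`, and a vertex of degree at least 3 also lies on a second line, i.e.
at a crossing point of two distinct lines, which it is determined by. Charging each counted edge
to the ordered pair (line containing the edge, other line through its endpoint) gives at most
two edges per ordered pair of lines, hence at most `2k(k-1)` edges.
-/

open Set

lemma IsLine.exists_eq_of_mem {d : ℕ} {L : Set (Fin d → ℝ)} (hL : IsLine L) {x : Fin d → ℝ}
    (hx : x ∈ L) : ∃ v ≠ 0, L = {y | ∃ t : ℝ, y = x + t • v} := by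
  obtain ⟨p, v, hv, rfl⟩ := hL
  obtain ⟨s, rfl⟩ := hx
  refine ⟨v, hv, Set.ext fun y => ⟨?_, ?_⟩⟩
  · rintro ⟨t, rfl⟩
    exact ⟨t - s, by module⟩
  · rintro ⟨t, rfl⟩
    exact ⟨s + t, by module⟩

lemma IsLine.eq_of_mem {d : ℕ} {L : Set (Fin d → ℝ)} (hL : IsLine L) {x y : Fin d → ℝ}
    (hx : x ∈ L) (hy : y ∈ L) (hxy : x ≠ y) :
    L = {z | ∃ t : ℝ, z = x + t • (y - x)} := by
  obtain ⟨v, -, rfl⟩ := hL.exists_eq_of_mem hx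
  obtain ⟨s, rfl⟩ := hy
  have hs : s ≠ 0 := by rintro rfl; simp at hxy
  refine Set.ext fun z => ⟨?_, ?_⟩
  · rintro ⟨t, rfl⟩
    exact ⟨t / s, by rw [add_sub_cancel_left, smul_smul, div_mul_cancel₀ _ hs]⟩
  · rintro ⟨t, rfl⟩
    exact ⟨t * s, by module⟩

lemma IsLine.eq_of_mem_of_mem {d : ℕ} {L₁ L₂ : Set (Fin d → ℝ)} (h₁ : IsLine L₁)
    (h₂ : IsLine L₂) (hne : L₁ ≠ L₂) {x y : Fin d → ℝ} (hx₁ : x ∈ L₁) (hx₂ : x ∈ L₂)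
    (hy₁ : y ∈ L₁) (hy₂ : y ∈ L₂) : x = y := by
  by_contra hxy
  exact hne ((h₁.eq_of_mem hx₁ hy₁ hxy).trans (h₂.eq_of_mem hx₂ hy₂ hxy).symm)

lemma add_smul_mem_segment {E : Type*} [AddCommGroup E] [Module ℝ E] (x v : E) {a b : ℝ}
    (h : a ∈ uIcc 0 b) : x + a • v ∈ segment ℝ x (x + b • v) := by
  have hf : ∀ t : ℝ, AffineMap.lineMap x (x + v) t = x + t • v := fun t => by
    simp [AffineMap.lineMap_apply, add_comm]
  have himage := image_segment ℝ (AffineMap.lineMap x (x + v)) 0 b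
  rw [hf, hf, zero_smul, add_zero] at himage
  rw [← himage, segment_eq_uIcc]
  exact ⟨a, h, hf a⟩

lemma mem_uIcc_or_mem_uIcc_of_lt_iff_lt {α : Type*} [LinearOrder α] {c a b : α} (ha : a ≠ c)
    (h : c < a ↔ c < b) : a ∈ uIcc c b ∨ b ∈ uIcc c a := by
  simp only [mem_uIcc]
  rcases ha.lt_or_gt with ha | ha <;> rcases le_total a b with hab | hab <;> grind

namespace LineCover

variable {V : Type*} {G : SimpleGraph V} {d k : ℕ} (C : LineCover G d k)

lemma pos_ne_of_adj {u w : V} (h : G.Adj u w) : C.pos u ≠ C.pos w :=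
  C.inj.ne h.ne

lemma eq_of_pos_mem_segment {u a b : V} (hua : G.Adj u a) (hub : G.Adj u b)
    (h : C.pos a ∈ segment ℝ (C.pos u) (C.pos b)) : a = b := by
  by_contra hab
  have hne : ({u, a} : Set V) ≠ {u, b} := by
    rw [Ne, Set.pair_eq_pair_iff]
    rintro (⟨-, rfl⟩ | ⟨rfl, -⟩)
    · exact hab rfl
    · exact hub.ne rfl
  obtain ⟨w, -, hwb, hw⟩ := C.noCross hua hub hne _ ⟨right_mem_segment ℝ _ _, h⟩
  obtain rfl : a = w := C.inj hw
  rcases hwb with rfl | rfl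
  · exact hua.ne rfl
  · exact hab rfl

lemma encard_adj_mem_line_le_two {L : Set (Fin d → ℝ)} (hL : IsLine L) {u : V}
    (hu : C.pos u ∈ L) : {w | G.Adj u w ∧ C.pos w ∈ L}.encard ≤ 2 := by
  obtain ⟨v, -, hLv⟩ := hL.exists_eq_of_mem hu
  have hparam : ∀ w ∈ {w | G.Adj u w ∧ C.pos w ∈ L}, ∃ t : ℝ, C.pos w = C.pos u + t • v :=
    fun w hw => by simpa [hLv] using hw.2
  choose! t ht using hparam
  have hinj : InjOn (fun w => 0 < t w) {w | G.Adj u w ∧ C.pos w ∈ L} := by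
    intro a ha b hb hside
    have hta : t a ≠ 0 := fun h0 => C.pos_ne_of_adj ha.1 (by rw [ht a ha, h0, zero_smul, add_zero])
    rcases mem_uIcc_or_mem_uIcc_of_lt_iff_lt hta (iff_of_eq hside) with h | h
    · refine C.eq_of_pos_mem_segment ha.1 hb.1 ?_
      rw [ht a ha, ht b hb]
      exact add_smul_mem_segment _ _ h
    · refine (C.eq_of_pos_mem_segment hb.1 ha.1 ?_).symm
      rw [ht a ha, ht b hb]
      exact add_smul_mem_segment _ _ h
  calc _ ≤ (univ : Set Prop).encard := encard_le_encard_of_injOn (mapsTo_univ _ _) hinj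
    _ = 2 := by simp

lemma exists_line_ne_of_three_le_ncard {u : V} (hdeg : 3 ≤ (G.neighborSet u).ncard) {i : Fin k}
    (hu : C.pos u ∈ C.lines i) : ∃ j, C.lines j ≠ C.lines i ∧ C.pos u ∈ C.lines j := by
  obtain ⟨a, hua, ha⟩ : ∃ a, G.Adj u a ∧ C.pos a ∉ C.lines i := by
    by_contra! h
    have hsub : G.neighborSet u ⊆ {w | G.Adj u w ∧ C.pos w ∈ C.lines i} :=
      fun w hw => ⟨hw, h w hw⟩
    have : ((G.neighborSet u).ncard : ℕ∞) ≤ 2 := (ncard_le_encard _).trans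
      ((encard_le_encard hsub).trans (C.encard_adj_mem_line_le_two (C.isLine i) hu))
    norm_cast at this
    omega
  obtain ⟨j, hj⟩ := C.coversE hua
  exact ⟨j, fun hji => ha (hji ▸ hj (right_mem_segment ℝ _ _)), hj (left_mem_segment ℝ _ _)⟩

def edgesAtCrossing (i j : Fin k) : Set (Sym2 V) :=
  {e | C.lines i ≠ C.lines j ∧ ∃ u w, e = s(u, w) ∧ G.Adj u w ∧ C.pos u ∈ C.lines j ∧
    C.pos u ∈ C.lines i ∧ C.pos w ∈ C.lines i}

lemma encard_edgesAtCrossing_le_two (i j : Fin k) : (C.edgesAtCrossing i j).encard ≤ 2 := by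
  rcases (C.edgesAtCrossing i j).eq_empty_or_nonempty with h | ⟨-, hne, u₀, -, -, -, hu₀j, hu₀i, -⟩
  · simp [h]
  have hsub : C.edgesAtCrossing i j ⊆
      (fun w => s(u₀, w)) '' {w | G.Adj u₀ w ∧ C.pos w ∈ C.lines i} := by
    rintro _ ⟨-, u, w, rfl, huw, huj, hui, hwi⟩
    obtain rfl : u = u₀ :=
      C.inj ((C.isLine i).eq_of_mem_of_mem (C.isLine j) hne hui huj hu₀i hu₀j)
    exact ⟨w, ⟨huw, hwi⟩, rfl⟩
  calc _ ≤ _ := encard_le_encard hsub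
    _ ≤ _ := encard_image_le _ _
    _ ≤ 2 := C.encard_adj_mem_line_le_two (C.isLine i) hu₀i

lemma subset_biUnion_edgesAtCrossing :
    {e ∈ G.edgeSet | ∃ v ∈ e, 3 ≤ (G.neighborSet v).ncard} ⊆
      ⋃ q ∈ (Finset.univ : Finset (Fin k)).offDiag, C.edgesAtCrossing q.1 q.2 := by
  rintro e ⟨he, u, hue, hdeg⟩
  obtain ⟨w, rfl⟩ := Sym2.mem_iff_exists.mp hue
  obtain ⟨i, hi⟩ := C.coversE he
  obtain ⟨j, hji, huj⟩ := C.exists_line_ne_of_three_le_ncard hdeg (hi (left_mem_segment ℝ _ _))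
  refine mem_biUnion (x := (i, j)) ?_ ⟨hji.symm, u, w, rfl, he, huj,
    hi (left_mem_segment ℝ _ _), hi (right_mem_segment ℝ _ _)⟩
  rw [Finset.coe_offDiag, Finset.coe_univ]
  exact ⟨mem_univ i, mem_univ j, fun hij : i = j => hji (hij ▸ rfl)⟩

end LineCover

/-- If `G` admits a straight-line drawing in `ℝ²` covered by `k` lines, then the number
of edges of `G` incident to vertices of degree at least 3 is at most `2k(k-1)`. -/
theorem stmt_4 {V : Type*} (G : SimpleGraph V) (k : ℕ)
    (h : Nonempty (LineCover G 2 k)) :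
    {e ∈ G.edgeSet | ∃ v ∈ e, 3 ≤ (G.neighborSet v).ncard}.ncard ≤ 2 * k * (k - 1) := by
  obtain ⟨C⟩ := h
  have hcard : (Finset.univ : Finset (Fin k)).offDiag.card = k * (k - 1) := by
    simp [Finset.offDiag_card, Nat.mul_sub_one]
  refine (encard_le_coe_iff_finite_ncard_le.mp ?_).2
  calc _ ≤ _ := encard_le_encard C.subset_biUnion_edgesAtCrossing
    _ ≤ _ := Finset.set_encard_biUnion_le _ _
    _ ≤ ∑ q ∈ (Finset.univ : Finset (Fin k)).offDiag, (2 : ℕ∞) :=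
      Finset.sum_le_sum fun q _ => C.encard_edgesAtCrossing_le_two q.1 q.2
    _ = ((2 * k * (k - 1) : ℕ) : ℕ∞) := by
      rw [Finset.sum_const, hcard, nsmul_eq_mul]
      norm_cast
      ring
end

section
/- For every graph G and d ≥ 3, the minimum number of lines needed to cover a straight-line drawing of G in ℝ^d equals the minimum number needed in ℝ³; i.e., ρ¹_d(G) = ρ¹_3(G) for all d ≥ 3. -/
open Set Submodule Module Pointwise

lemma IsLine.image {d e : ℕ} {L : Set (Fin d → ℝ)} (hL : IsLine L)
    (f : (Fin d → ℝ) →ₗ[ℝ] (Fin e → ℝ)) (hf : InjOn f L) : IsLine (f '' L) := by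
  obtain ⟨p, v, hv, rfl⟩ := hL
  have hfv : f v ≠ 0 := fun h0 => hv <| by
    simpa using hf ⟨1, rfl⟩ ⟨0, rfl⟩ (by simp [h0])
  refine ⟨f p, f v, hfv, Set.ext fun x => ⟨?_, ?_⟩⟩
  · rintro ⟨y, ⟨t, rfl⟩, rfl⟩
    exact ⟨t, by simp⟩
  · rintro ⟨t, rfl⟩
    exact ⟨p + t • v, ⟨t, rfl⟩, by simp⟩

lemma IsLine.finrank_span_sub_le {d : ℕ} {L M : Set (Fin d → ℝ)} (hL : IsLine L)
    (hM : IsLine M) : finrank ℝ (span ℝ (L - M)) ≤ 3 := by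
  obtain ⟨p, v, -, rfl⟩ := hL
  obtain ⟨q, w, -, rfl⟩ := hM
  have hle : span ℝ ({x | ∃ t : ℝ, x = p + t • v} - {x | ∃ s : ℝ, x = q + s • w}) ≤
      span ℝ (range ![p - q, v, w]) := by
    have mem (i : Fin 3) : ![p - q, v, w] i ∈ span ℝ (range ![p - q, v, w]) :=
      subset_span (mem_range_self i)
    rw [span_le]
    rintro _ ⟨_, ⟨t, rfl⟩, _, ⟨s, rfl⟩, rfl⟩
    change p + t • v - (q + s • w) ∈ _
    rw [show p + t • v - (q + s • w) = (p - q) + t • v - s • w by module]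
    exact sub_mem (add_mem (mem 0) (smul_mem _ _ (mem 1))) (smul_mem _ _ (mem 2))
  exact (Submodule.finrank_mono hle).trans (finrank_range_le_card _)

lemma exists_ne_zero_forall_notMem {K E ι : Type*} [DivisionRing K] [Infinite K]
    [AddCommGroup E] [Module K E] [Nontrivial E] [Finite ι] (W : ι → Submodule K E)
    (hW : ∀ i, W i ≠ ⊤) : ∃ u ≠ 0, ∀ i, u ∉ W i := by
  by_contra! h
  obtain ⟨o, ho⟩ := Subspace.exists_eq_top_of_iUnion_eq_univ (p := fun o : Option ι => o.elim ⊥ W)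
    (eq_univ_of_forall fun u => mem_iUnion.2 <| by
      by_cases hu : u = 0
      · exact ⟨none, hu⟩
      · obtain ⟨i, hi⟩ := h u hu
        exact ⟨some i, hi⟩)
  cases o with
  | none => exact bot_ne_top ho
  | some i => exact hW i ho

lemma exists_linearMap_injOn_iUnion_isLine {d : ℕ} (hd : 3 ≤ d) {ι : Type*} [Finite ι]
    {L : ι → Set (Fin (d + 1) → ℝ)} (hL : ∀ i, IsLine (L i)) :
    ∃ f : (Fin (d + 1) → ℝ) →ₗ[ℝ] (Fin d → ℝ), InjOn f (⋃ i, L i) := by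
  obtain ⟨u, hu0, hu⟩ := exists_ne_zero_forall_notMem
    (fun ij : ι × ι => span ℝ (L ij.1 - L ij.2)) fun ij htop => by
      have := (hL ij.1).finrank_span_sub_le (hL ij.2)
      rw [htop, finrank_top, finrank_fin_fun] at this
      omega
  have hrank : finrank ℝ ((Fin (d + 1) → ℝ) ⧸ ℝ ∙ u) = finrank ℝ (Fin d → ℝ) := by
    have := (ℝ ∙ u).finrank_quotient_add_finrank
    rw [finrank_span_singleton hu0, finrank_fin_fun] at this
    rw [finrank_fin_fun]
    omega
  refine ⟨(LinearEquiv.ofFinrankEq _ _ hrank).toLinearMap ∘ₗ (ℝ ∙ u).mkQ, ?_⟩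
  intro x hx y hy hxy
  obtain ⟨i, hx⟩ := mem_iUnion.1 hx
  obtain ⟨j, hy⟩ := mem_iUnion.1 hy
  have hker : x - y ∈ ℝ ∙ u := by
    rw [← (ℝ ∙ u).ker_mkQ, LinearMap.mem_ker, map_sub, sub_eq_zero]
    exact (LinearEquiv.injective _) hxy
  have hspan : x - y ∈ span ℝ (L i - L j) := subset_span (sub_mem_sub hx hy)
  exact sub_eq_zero.1 <| disjoint_def.1 ((disjoint_span_singleton' hu0).2 (hu (i, j))) _ hspan hker

lemma LinearMap.image_segment {E F : Type*} [AddCommGroup E] [AddCommGroup F] [Module ℝ E]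
    [Module ℝ F] (f : E →ₗ[ℝ] F) (a b : E) : f '' segment ℝ a b = segment ℝ (f a) (f b) :=
  _root_.image_segment ℝ f.toAffineMap a b

namespace LineCover

variable {V : Type*} {G : SimpleGraph V} {d e k : ℕ}

lemma pos_mem_iUnion (C : LineCover G d k) (v : V) : C.pos v ∈ ⋃ i, C.lines i :=
  mem_iUnion.2 (C.coversV v)

lemma segment_subset_iUnion (C : LineCover G d k) {u v : V} (h : G.Adj u v) :
    segment ℝ (C.pos u) (C.pos v) ⊆ ⋃ i, C.lines i :=
  let ⟨i, hi⟩ := C.coversE h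
  hi.trans (subset_iUnion _ i)

noncomputable def map (C : LineCover G d k) (f : (Fin d → ℝ) →ₗ[ℝ] (Fin e → ℝ))
    (hf : InjOn f (⋃ i, C.lines i)) : LineCover G e k where
  pos v := f (C.pos v)
  inj u v h := C.inj (hf (C.pos_mem_iUnion u) (C.pos_mem_iUnion v) h)
  lines i := f '' C.lines i
  isLine i := (C.isLine i).image f (hf.mono (subset_iUnion _ i))
  coversV v := (C.coversV v).imp fun _ => mem_image_of_mem f
  coversE u v h := (C.coversE h).imp fun _ hi => by
    rw [← f.image_segment]
    exact image_mono hi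
  noCross u v a b huv hab hne x hx := by
    rw [← f.image_segment, ← f.image_segment,
      ← hf.image_inter (C.segment_subset_iUnion huv) (C.segment_subset_iUnion hab)] at hx
    obtain ⟨y, hy, rfl⟩ := hx
    obtain ⟨w, hwuv, hwab, rfl⟩ := C.noCross huv hab hne y hy
    exact ⟨w, hwuv, hwab, rfl⟩

lemma nonempty_of_le (hde : d ≤ e) : Nonempty (LineCover G d k) → Nonempty (LineCover G e k)
  | ⟨C⟩ => ⟨C.map (Function.ExtendByZero.linearMap ℝ (Fin.castLE hde))
      (Function.extend_injective (Fin.castLE_injective hde) 0).injOn⟩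

lemma nonempty_of_succ (hd : 3 ≤ d) :
    Nonempty (LineCover G (d + 1) k) → Nonempty (LineCover G d k)
  | ⟨C⟩ =>
    let ⟨f, hf⟩ := exists_linearMap_injOn_iUnion_isLine hd C.isLine
    ⟨C.map f hf⟩

lemma nonempty_three_of_le (hd : 3 ≤ d) :
    Nonempty (LineCover G d k) → Nonempty (LineCover G 3 k) := by
  induction d, hd using Nat.le_induction with
  | base => exact id
  | succ d hd ih => exact fun h => ih (nonempty_of_succ hd h)

end LineCover

/-- For every graph `G` and `d ≥ 3`, `ρ¹_d(G) = ρ¹_3(G)`. -/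
theorem stmt_5 {V : Type*} (G : SimpleGraph V) (d : ℕ) (hd : 3 ≤ d) :
    rho1 G d = rho1 G 3 :=
  congrArg sInf <| Set.ext fun _ =>
    ⟨LineCover.nonempty_three_of_le hd, LineCover.nonempty_of_le hd⟩
end

section
/- If a connected graph G (not a path) admits a k-line cover in ℝ², then G has fewer than 2k² vertices of degree 1. -/
section Line

variable {d : ℕ} {L L' : Set (Fin d → ℝ)}

theorem IsLine.exists_affineMap (h : IsLine L) :
    ∃ φ : ℝ →ᵃ[ℝ] (Fin d → ℝ), Function.Injective φ ∧ Set.range φ = L := by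
  obtain ⟨p, v, hv, rfl⟩ := h
  refine ⟨AffineMap.lineMap p (p + v), fun s t hst => ?_, ?_⟩
  · simpa [AffineMap.lineMap_apply, hv, smul_left_injective] using hst
  · ext x
    simp [AffineMap.lineMap_apply, eq_comm, add_comm]

theorem IsLine.eq_range_lineMap (h : IsLine L) {a b : Fin d → ℝ} (ha : a ∈ L) (hb : b ∈ L)
    (hab : a ≠ b) : L = Set.range (AffineMap.lineMap a b : ℝ → Fin d → ℝ) := by
  obtain ⟨φ, hφ, rfl⟩ := h.exists_affineMap
  obtain ⟨s, rfl⟩ := ha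
  obtain ⟨t, rfl⟩ := hb
  have hst : t - s ≠ 0 := sub_ne_zero.mpr fun h => hab (by rw [h])
  ext x
  constructor
  · rintro ⟨u, rfl⟩
    refine ⟨(u - s) / (t - s), ?_⟩
    rw [← AffineMap.apply_lineMap, AffineMap.lineMap_apply_module', smul_eq_mul,
      div_mul_cancel₀ _ hst, sub_add_cancel]
  · rintro ⟨r, rfl⟩
    exact ⟨_, AffineMap.apply_lineMap φ s t r⟩

theorem IsLine.inter_subsingleton (h : IsLine L) (h' : IsLine L') (hne : L ≠ L') :
    (L ∩ L').Subsingleton := fun a ha b hb => by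
  by_contra hab
  exact hne ((h.eq_range_lineMap ha.1 hb.1 hab).trans (h'.eq_range_lineMap ha.2 hb.2 hab).symm)

theorem IsLine.segment_subset_union (h : IsLine L) {x y z : Fin d → ℝ} (hx : x ∈ L)
    (hy : y ∈ L) (hz : z ∈ L) : segment ℝ x z ⊆ segment ℝ x y ∪ segment ℝ y z := by
  obtain ⟨φ, -, rfl⟩ := h.exists_affineMap
  obtain ⟨⟨a, rfl⟩, ⟨b, rfl⟩, ⟨c, rfl⟩⟩ := And.intro hx (And.intro hy hz)
  simp only [← image_segment, segment_eq_uIcc, ← Set.image_union]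
  exact Set.image_mono Set.uIcc_subset_uIcc_union_uIcc

theorem IsLine.mem_segment_of_three (h : IsLine L) {x y z p : Fin d → ℝ} (hx : x ∈ L)
    (hy : y ∈ L) (hz : z ∈ L) (hp : p ∈ L) :
    x ∈ segment ℝ y p ∨ y ∈ segment ℝ x p ∨ x ∈ segment ℝ z p ∨ z ∈ segment ℝ x p ∨
      y ∈ segment ℝ z p ∨ z ∈ segment ℝ y p := by
  obtain ⟨φ, hφ, rfl⟩ := h.exists_affineMap
  obtain ⟨⟨a, rfl⟩, ⟨b, rfl⟩, ⟨c, rfl⟩, ⟨q, rfl⟩⟩ := And.intro hx (And.intro hy (And.intro hz hp))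
  simp only [← image_segment, segment_eq_uIcc, hφ.mem_set_image, Set.mem_uIcc]
  grind

end Line

namespace SimpleGraph

variable {V : Type*} {G : SimpleGraph V}

theorem Preconnected.mem_of_adj_closed (hG : G.Preconnected) {S : Set V} {v : V} (hv : v ∈ S)
    (hS : ∀ ⦃a b⦄, a ∈ S → G.Adj a b → b ∈ S) (w : V) : w ∈ S := by
  obtain ⟨W⟩ := hG v w
  induction W with
  | nil => exact hv
  | cons hab _ ih => exact ih (hS hv hab)

theorem Walk.IsPath.eq_or_eq_of_neighborSet_subsingleton {a b v : V} {P : G.Walk a b}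
    (hP : P.IsPath) (hv : v ∈ P.support) (hdeg : (G.neighborSet v).Subsingleton) :
    v = a ∨ v = b := by
  obtain ⟨n, rfl, hn⟩ := Walk.mem_support_iff_exists_getVert.mp hv
  by_contra! hab
  have h0 : n ≠ 0 := fun h => hab.1 (by simp [h])
  have hlen : n ≠ P.length := fun h => hab.2 (by simp [h])
  have hprev : G.Adj (P.getVert n) (P.getVert (n - 1)) := by
    simpa [Nat.sub_add_cancel (Nat.pos_of_ne_zero h0)] using
      (P.adj_getVert_succ (i := n - 1) (by omega)).symm
  have hnext : G.Adj (P.getVert n) (P.getVert (n + 1)) := P.adj_getVert_succ (by omega)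
  have := hP.getVert_injOn (by rw [Set.mem_ofPred_eq]; omega) (by rw [Set.mem_ofPred_eq]; omega)
    (hdeg hprev hnext)
  omega

section LinearOrder

variable [LinearOrder V]

theorem Preconnected.eq_hasse (hG : G.Preconnected)
    (hjump : ∀ ⦃a b c⦄, G.Adj a b → a < c → c < b → False) : G = hasse V := by
  ext a b
  rw [hasse_adj]
  constructor
  · intro hab
    rcases lt_trichotomy a b with h | rfl | h
    · exact Or.inl ⟨h, fun c hac hcb => hjump hab hac hcb⟩
    · exact absurd hab (G.loopless.irrefl a)
    · exact Or.inr ⟨h, fun c hbc hca => hjump hab.symm hbc hca⟩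
  · suffices ∀ {a b}, a ⋖ b → G.Adj a b by
      rintro (h | h)
      exacts [this h, (this h).symm]
    intro a b hab
    have crossing : ∀ {x y} (W : G.Walk x y), x ≤ a → b ≤ y →
        ∃ u c, G.Adj u c ∧ u ≤ a ∧ b ≤ c := by
      intro x y W
      induction W with
      | nil => exact fun hx hy => absurd (hx.trans_lt hab.lt) (not_lt.mpr hy)
      | @cons u c _ huc _ ih =>
        intro hu hy
        rcases le_or_gt c a with hc | hc
        · exact ih hc hy
        · exact ⟨u, c, huc, hu, not_lt.mp fun h => hab.2 hc h⟩
    obtain ⟨W⟩ := hG a b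
    obtain ⟨u, c, huc, hu, hc⟩ := crossing W le_rfl le_rfl
    obtain rfl : u = a := hu.eq_or_lt.resolve_right fun h => hjump huc h (hab.lt.trans_le hc)
    obtain rfl : c = b := hc.eq_or_lt'.resolve_right fun h => hjump huc hab.lt h
    exact huc

theorem Preconnected.nonempty_iso_pathGraph [Fintype V] (hG : G.Preconnected)
    (hjump : ∀ ⦃a b c⦄, G.Adj a b → a < c → c < b → False) :
    Nonempty (G ≃g pathGraph (Fintype.card V)) := by
  let e : V ≃o Fin (Fintype.card V) := (Fintype.orderIsoFinOfCardEq V rfl).symm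
  rw [hG.eq_hasse hjump]
  exact ⟨{ e.toEquiv with map_rel_iff' := by simp [pathGraph, apply_covBy_apply_iff] }⟩

end LinearOrder

end SimpleGraph

namespace LineCover

variable {V : Type*} {G : SimpleGraph V} {d k : ℕ} (C : LineCover G d k)

def graphOn (ℓ : Set (Fin d → ℝ)) : SimpleGraph V where
  Adj a b := G.Adj a b ∧ segment ℝ (C.pos a) (C.pos b) ⊆ ℓ
  symm := ⟨fun _ _ h => ⟨h.1.symm, segment_symm ℝ (C.pos _) (C.pos _) ▸ h.2⟩⟩
  loopless := ⟨fun a h => G.loopless.irrefl a h.1⟩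

theorem graphOn_le (ℓ : Set (Fin d → ℝ)) : C.graphOn ℓ ≤ G := fun _ _ h => h.1

-- The leaf `v` is charged to the ordered pair `(i, j)`; the exit vertex `w` lies on the crossing
-- of the two lines.
structure ExitsVia (v : V) (i j : Fin k) : Prop where
  pos_mem : C.pos v ∈ C.lines i
  segment_subset : ∀ ⦃x⦄, G.Adj v x → segment ℝ (C.pos v) (C.pos x) ⊆ C.lines i
  exit : ∃ w x, (C.graphOn (C.lines i)).Reachable v w ∧ G.Adj w x ∧
    segment ℝ (C.pos w) (C.pos x) ⊆ C.lines j ∧ ¬ segment ℝ (C.pos w) (C.pos x) ⊆ C.lines i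

variable {C} {ℓ : Set (Fin d → ℝ)} {i j : Fin k}

theorem pos_mem_of_reachable {a b : V} (hab : (C.graphOn ℓ).Reachable a b) (ha : C.pos a ∈ ℓ) :
    C.pos b ∈ ℓ := by
  obtain ⟨W⟩ := hab
  induction W with
  | nil => exact ha
  | cons h _ ih => exact ih (h.2 (right_mem_segment ℝ _ _))

theorem eq_or_eq_of_mem_segment {a b c u : V} (hcu : G.Adj c u) (hab : G.Adj a b)
    (hc : C.pos c ∈ segment ℝ (C.pos a) (C.pos b)) : c = a ∨ c = b := by
  by_cases he : ({c, u} : Set V) = {a, b}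
  · have hc : c ∈ ({a, b} : Set V) := he ▸ Set.mem_insert c {u}
    simpa using hc
  · obtain ⟨w, hw | rfl, hwab, hpos⟩ :=
      C.noCross hcu hab he (C.pos c) ⟨left_mem_segment ℝ _ _, hc⟩
    · exact hw ▸ hwab
    · exact absurd (C.inj hpos) hcu.ne

theorem mem_support_of_mem_segment (hℓ : IsLine ℓ) {a b c u : V} (W : (C.graphOn ℓ).Walk a b)
    (hb : C.pos b ∈ ℓ) (hcu : G.Adj c u) (hc : C.pos c ∈ segment ℝ (C.pos a) (C.pos b)) :
    c ∈ W.support := by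
  induction W with
  | nil => simp [C.inj (by simpa using hc)]
  | @cons a m b ham W ih =>
    rcases hℓ.segment_subset_union (ham.2 (left_mem_segment ℝ _ _))
      (ham.2 (right_mem_segment ℝ _ _)) hb hc with h | h
    · rcases eq_or_eq_of_mem_segment hcu ham.1 h with rfl | rfl <;> simp
    · simp [ih hb h]

theorem nonempty_iso_pathGraph [Fintype V] (hG : G.Preconnected) (hℓ : IsLine ℓ)
    (hpos : ∀ v, C.pos v ∈ ℓ) : Nonempty (G ≃g SimpleGraph.pathGraph (Fintype.card V)) := by
  obtain ⟨φ, hφ, rfl⟩ := hℓ.exists_affineMap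
  choose ξ hξ using hpos
  have hξinj : Function.Injective ξ := fun a b h => C.inj (by rw [← hξ a, ← hξ b, h])
  let _ : LinearOrder V := LinearOrder.lift' ξ hξinj
  refine hG.nonempty_iso_pathGraph fun a b c hab hac hcb => ?_
  have hc : C.pos c ∈ segment ℝ (C.pos a) (C.pos b) := by
    rw [← hξ a, ← hξ b, ← hξ c, ← image_segment, segment_eq_uIcc]
    exact Set.mem_image_of_mem φ (Set.mem_uIcc_of_le hac.le hcb.le)
  obtain ⟨W⟩ := hG c a
  have hca : c ≠ a := hac.ne'
  rcases eq_or_eq_of_mem_segment (W.adj_snd (SimpleGraph.Walk.not_nil_of_ne hca)) hab hc with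
    rfl | rfl
  exacts [hca rfl, hcb.false]

theorem ExitsVia.lines_ne {v : V} (h : C.ExitsVia v i j) : C.lines i ≠ C.lines j := by
  obtain ⟨w, x, -, -, hj, hi⟩ := h.exit
  exact fun he => hi (he ▸ hj)

variable (C) in
theorem exists_exitsVia [Fintype V] (hG : G.Connected)
    (hpath : ∀ n : ℕ, ¬ Nonempty (G ≃g SimpleGraph.pathGraph n)) {v : V}
    (hv : (G.neighborSet v).ncard = 1) : ∃ i j, C.ExitsVia v i j := by
  obtain ⟨u, hu⟩ := Set.ncard_eq_one.mp hv
  have hadj : ∀ x, G.Adj v x ↔ x = u := fun x => by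
    rw [← SimpleGraph.mem_neighborSet, hu, Set.mem_singleton_iff]
  obtain ⟨i, hi⟩ := C.coversE ((hadj u).mpr rfl)
  have hedges : ∀ ⦃x⦄, G.Adj v x → segment ℝ (C.pos v) (C.pos x) ⊆ C.lines i := by
    intro x hx
    exact (hadj x).mp hx ▸ hi
  have hposv : C.pos v ∈ C.lines i := hi (left_mem_segment ℝ _ _)
  by_contra! hno
  have hreach : ∀ w, (C.graphOn (C.lines i)).Reachable v w := by
    refine hG.preconnected.mem_of_adj_closed (S := {w | (C.graphOn _).Reachable v w})
      SimpleGraph.Reachable.rfl fun a b ha hab => ?_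
    obtain ⟨j, hj⟩ := C.coversE hab
    by_cases hab' : segment ℝ (C.pos a) (C.pos b) ⊆ C.lines i
    · exact SimpleGraph.Reachable.trans ha (SimpleGraph.Adj.reachable ⟨hab, hab'⟩)
    · exact absurd ⟨hposv, hedges, a, b, ha, hab, hj, hab'⟩ (hno i j)
  exact hpath _ <| C.nonempty_iso_pathGraph hG.preconnected (C.isLine i)
    fun w => pos_mem_of_reachable (hreach w) hposv

theorem eq_of_exitsVia_of_mem_segment {va vb : V} {p : Fin d → ℝ}
    (hva : (G.neighborSet va).ncard = 1) (ha : C.ExitsVia va i j) (hb : C.ExitsVia vb i j)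
    (hp : p ∈ C.lines i ∩ C.lines j) (hseg : C.pos va ∈ segment ℝ (C.pos vb) p) : va = vb := by
  obtain ⟨wb, x, hR, hwx, hj, hi⟩ := hb.exit
  have hwb : C.pos wb ∈ C.lines i := pos_mem_of_reachable hR hb.pos_mem
  have hpw : p = C.pos wb := (C.isLine i).inter_subsingleton (C.isLine j) hb.lines_ne hp
    ⟨hwb, hj (left_mem_segment ℝ _ _)⟩
  obtain ⟨P, hP⟩ := hR.exists_isPath
  obtain ⟨u, hu⟩ := Set.ncard_eq_one.mp hva
  have hmem : va ∈ P.support :=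
    mem_support_of_mem_segment (C.isLine i) P hwb (u := u)
      ((SimpleGraph.mem_neighborSet ..).mp (hu ▸ rfl)) (hpw ▸ hseg)
  have hleaf : ((C.graphOn (C.lines i)).neighborSet va).Subsingleton :=
    (hu ▸ Set.subsingleton_singleton).anti (SimpleGraph.neighborSet_mono (C.graphOn_le _) va)
  refine (hP.eq_or_eq_of_neighborSet_subsingleton hmem hleaf).resolve_right ?_
  rintro rfl
  exact hi (ha.segment_subset hwx)

theorem eq_or_eq_or_eq_of_exitsVia {v₁ v₂ v₃ : V} (h₁ : (G.neighborSet v₁).ncard = 1)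
    (h₂ : (G.neighborSet v₂).ncard = 1) (h₃ : (G.neighborSet v₃).ncard = 1)
    (E₁ : C.ExitsVia v₁ i j) (E₂ : C.ExitsVia v₂ i j) (E₃ : C.ExitsVia v₃ i j) :
    v₁ = v₂ ∨ v₁ = v₃ ∨ v₂ = v₃ := by
  obtain ⟨w, x, hR, -, hj, -⟩ := E₁.exit
  have hp : C.pos w ∈ C.lines i ∩ C.lines j :=
    ⟨pos_mem_of_reachable hR E₁.pos_mem, hj (left_mem_segment ℝ _ _)⟩
  rcases (C.isLine i).mem_segment_of_three E₁.pos_mem E₂.pos_mem E₃.pos_mem hp.1 with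
    h | h | h | h | h | h
  · exact .inl (eq_of_exitsVia_of_mem_segment h₁ E₁ E₂ hp h)
  · exact .inl (eq_of_exitsVia_of_mem_segment h₂ E₂ E₁ hp h).symm
  · exact .inr (.inl (eq_of_exitsVia_of_mem_segment h₁ E₁ E₃ hp h))
  · exact .inr (.inl (eq_of_exitsVia_of_mem_segment h₃ E₃ E₁ hp h).symm)
  · exact .inr (.inr (eq_of_exitsVia_of_mem_segment h₂ E₂ E₃ hp h))
  · exact .inr (.inr (eq_of_exitsVia_of_mem_segment h₃ E₃ E₂ hp h).symm)

theorem card_le_two_of_exitsVia {s : Finset V}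
    (hs : ∀ v ∈ s, (G.neighborSet v).ncard = 1 ∧ C.ExitsVia v i j) : s.card ≤ 2 := by
  by_contra! h3
  obtain ⟨a, ha, b, hb, c, hc, hab, hac, hbc⟩ := Finset.two_lt_card.mp h3
  rcases eq_or_eq_or_eq_of_exitsVia (hs a ha).1 (hs b hb).1 (hs c hc).1 (hs a ha).2 (hs b hb).2
    (hs c hc).2 with h | h | h
  exacts [hab h, hac h, hbc h]

end LineCover

/-- If a connected graph `G` that is not a path admits a `k`-line cover in `ℝ²`, then
`G` has fewer than `2k²` vertices of degree 1. -/
theorem stmt_10 {V : Type*} [Fintype V] (G : SimpleGraph V) (k : ℕ)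
    (hconn : G.Connected)
    (hpath : ∀ n : ℕ, ¬ Nonempty (G ≃g SimpleGraph.pathGraph n))
    (h : Nonempty (LineCover G 2 k)) :
    {v : V | (G.neighborSet v).ncard = 1}.ncard < 2 * k ^ 2 := by
  classical
  obtain ⟨C⟩ := h
  obtain ⟨i₀, -⟩ := C.coversV hconn.nonempty.some
  have : Nonempty (Fin k) := ⟨i₀⟩
  set leaves := Finset.univ.filter fun v => (G.neighborSet v).ncard = 1
  have hleaf : ∀ v ∈ leaves, (G.neighborSet v).ncard = 1 := fun v hv => (Finset.mem_filter.mp hv).2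
  choose! I J hE using fun v hv => C.exists_exitsVia hconn hpath (hleaf v hv)
  have hmaps : ∀ v ∈ leaves, (I v, J v) ∈ (Finset.univ : Finset (Fin k)).offDiag := fun v hv =>
    Finset.mem_offDiag.mpr ⟨Finset.mem_univ _, Finset.mem_univ _,
      fun h => (hE v hv).lines_ne (congrArg C.lines h)⟩
  have hfibre : ∀ ij ∈ (Finset.univ : Finset (Fin k)).offDiag,
      (leaves.filter fun v => (I v, J v) = ij).card ≤ 2 := by
    rintro ⟨i, j⟩ -
    refine LineCover.card_le_two_of_exitsVia (C := C) (i := i) (j := j) fun v hv => ?_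
    obtain ⟨hvl, hij⟩ := Finset.mem_filter.mp hv
    obtain ⟨rfl, rfl⟩ := Prod.mk.inj hij
    exact ⟨hleaf v hvl, hE v hvl⟩
  calc {v : V | (G.neighborSet v).ncard = 1}.ncard = leaves.card := by
        rw [← Set.ncard_coe_finset]; simp [leaves]
    _ ≤ 2 * (Finset.univ : Finset (Fin k)).offDiag.card :=
        Finset.card_le_mul_card_image_of_maps_to hmaps 2 hfibre
    _ < 2 * k ^ 2 := by
        rw [Finset.offDiag_card, Finset.card_univ, Fintype.card_fin, sq]
        have := Nat.sub_lt (Nat.mul_pos i₀.pos i₀.pos) i₀.pos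
        omega
end

section
/- For every graph G, the weak affine cover number π¹_3(G) equals the linear vertex arboricity of G: the minimum number of parts in a partition of V(G) into sets each inducing a linear forest. -/
/-- `P` is a plane in `ℝ³`. -/
def IsPlane (P : Set (Fin 3 → ℝ)) : Prop :=
  ∃ p u v : Fin 3 → ℝ, LinearIndependent ℝ ![u, v] ∧
    P = {x | ∃ s t : ℝ, x = p + s • u + t • v}

/-- A weak `k`-line cover of `G` in `ℝ³`: a crossing-free straight-line drawing of `G`
whose vertices (but not necessarily edges) lie on `k` lines. -/
structure WeakLineCover {V : Type*} (G : SimpleGraph V) (k : ℕ) where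
  pos : V → (Fin 3 → ℝ)
  inj : Function.Injective pos
  lines : Fin k → Set (Fin 3 → ℝ)
  isLine : ∀ i, IsLine (lines i)
  coversV : ∀ v, ∃ i, pos v ∈ lines i
  noCross : ∀ ⦃u v a b⦄, G.Adj u v → G.Adj a b → ({u, v} : Set V) ≠ {a, b} →
    ∀ x ∈ segment ℝ (pos u) (pos v) ∩ segment ℝ (pos a) (pos b),
      ∃ w, (w = u ∨ w = v) ∧ (w = a ∨ w = b) ∧ x = pos w

/-- A weak `k`-plane cover of `G` in `ℝ³`: a crossing-free straight-line drawing of `G`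
whose vertices (but not necessarily edges) lie on `k` planes. -/
structure WeakPlaneCover {V : Type*} (G : SimpleGraph V) (k : ℕ) where
  pos : V → (Fin 3 → ℝ)
  inj : Function.Injective pos
  planes : Fin k → Set (Fin 3 → ℝ)
  isPlane : ∀ i, IsPlane (planes i)
  coversV : ∀ v, ∃ i, pos v ∈ planes i
  noCross : ∀ ⦃u v a b⦄, G.Adj u v → G.Adj a b → ({u, v} : Set V) ≠ {a, b} →
    ∀ x ∈ segment ℝ (pos u) (pos v) ∩ segment ℝ (pos a) (pos b),
      ∃ w, (w = u ∨ w = v) ∧ (w = a ∨ w = b) ∧ x = pos w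

/-- The weak affine cover number `π¹_3(G)`. -/
noncomputable def pi13 {V : Type*} (G : SimpleGraph V) : ℕ :=
  sInf {k | Nonempty (WeakLineCover G k)}

/-- The weak affine cover number `π²_3(G)`. -/
noncomputable def pi23 {V : Type*} (G : SimpleGraph V) : ℕ :=
  sInf {k | Nonempty (WeakPlaneCover G k)}

/-- A linear forest: a graph whose connected components are paths, equivalently an
acyclic graph of maximum degree at most 2. -/
def IsLinearForest {W : Type*} (H : SimpleGraph W) : Prop :=
  H.IsAcyclic ∧ ∀ v, (H.neighborSet v).ncard ≤ 2

/-- The linear vertex arboricity `lva(G)`: the minimum number of parts in a partition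
of `V(G)` into sets each inducing a linear forest. -/
noncomputable def lva {V : Type*} (G : SimpleGraph V) : ℕ :=
  sInf {r | ∃ f : V → Fin r, ∀ i, IsLinearForest (G.induce (f ⁻¹' {i}))}

/-!
On one line of a weak line cover, no vertex can have two neighbours on the same side of it: the
two edges would overlap next to the vertex. So every vertex has at most two neighbours on its
line, and the highest vertex of a cycle would have two neighbours below it; assigning each vertex
to a line through it therefore partitions the vertices into linear forests.

Conversely, number each linear forest of a partition so that edges join consecutive numbers, and
put the `i`-th forest on the line `{(s, i s, i)}`. These lines are rulings of the hyperbolic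
paraboloid `y = x z`, so they are pairwise skew, and a plane containing one of them meets all the
others in points with one common parameter `s`. Placing the vertices one at a time in the order of
their numbers, each at a generic parameter beyond all previous ones, makes the parameters distinct
and no four vertices on four different lines coplanar. Two edges meeting outside a common endpoint
would then give three collinear vertices not all on one line, four coplanar vertices, or a vertex
inside an edge of its own line, and each of these is ruled out.
-/

namespace LineCover

open Set Matrix

section Intervals

variable {α : Type*} [LinearOrder α] {x a b c d θ : α}

lemma exists_ne_mem_uIcc_inter [DenselyOrdered α] (h : x < a ↔ x < b) (ha : a ≠ x)
    (hb : b ≠ x) : ∃ θ ≠ x, θ ∈ uIcc x a ∧ θ ∈ uIcc x b := by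
  simp only [mem_uIcc]
  rcases lt_or_gt_of_ne ha with hax | hax
  · have hbx : b < x := by grind
    obtain ⟨θ, h₁, h₂⟩ := exists_between (max_lt hax hbx)
    exact ⟨θ, h₂.ne, by grind⟩
  · obtain ⟨θ, h₁, h₂⟩ := exists_between (lt_min hax (h.mp hax))
    exact ⟨θ, h₁.ne', by grind⟩

lemma mem_uIcc_or_mem_uIcc_of_ne (h₁ : θ ∈ uIcc x a) (h₂ : θ ∈ uIcc x b) (hθ : θ ≠ x) :
    a ∈ uIcc x b ∨ b ∈ uIcc x a := by
  simp only [mem_uIcc] at *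
  grind

lemma endpoint_mem_uIcc_of_mem_uIcc (h₁ : θ ∈ uIcc a b) (h₂ : θ ∈ uIcc c d) :
    a ∈ uIcc c d ∨ b ∈ uIcc c d ∨ c ∈ uIcc a b ∨ d ∈ uIcc a b := by
  simp only [mem_uIcc] at *
  grind

end Intervals

section LinearForest

variable {W : Type*} {H : SimpleGraph W}

theorem isLinearForest_of_injective {α : Type*} [LinearOrder α] {τ : W → α}
    (hτ : Function.Injective τ)
    (hside : ∀ ⦃x a b⦄, H.Adj x a → H.Adj x b → (τ x < τ a ↔ τ x < τ b) → a = b) :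
    IsLinearForest H := by
  have hne : ∀ ⦃x a⦄, H.Adj x a → τ x ≠ τ a := fun x a h e => h.ne (hτ e)
  refine ⟨fun v c hc => ?_, fun v => ?_⟩
  · classical
    obtain ⟨m, hm, hmax⟩ := c.support.toFinset.exists_max_image τ ⟨v, by simp⟩
    rw [List.mem_toFinset] at hm
    obtain ⟨a, b, hab, hnb⟩ := Set.ncard_eq_two.mp (hc.ncard_neighborSet_toSubgraph_eq_two hm)
    have hnbr : ∀ y ∈ c.toSubgraph.neighborSet m, H.Adj m y ∧ τ y < τ m := fun y hy =>
      have hadj := c.toSubgraph.adj_sub hy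
      ⟨hadj, lt_of_le_of_ne (hmax y (List.mem_toFinset.mpr <| (c.mem_verts_toSubgraph).mp
        (c.toSubgraph.edge_vert hy.symm))) (hne hadj).symm⟩
    obtain ⟨ha, ha'⟩ := hnbr a (by simp [hnb])
    obtain ⟨hb, hb'⟩ := hnbr b (by simp [hnb])
    exact hab (hside ha hb (iff_of_false ha'.not_gt hb'.not_gt))
  · by_contra! h3
    obtain ⟨a, b, c, ha, hb, hc, hab, hac, hbc⟩ :=
      (Set.two_lt_ncard_iff (Set.finite_of_ncard_pos (by omega))).mp h3
    have key : ∀ ⦃y z⦄, H.Adj v y → H.Adj v z → y ≠ z → (τ v < τ y ↔ ¬ τ v < τ z) :=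
      fun y z hy hz hyz => by
        by_cases h : τ v < τ y <;> by_cases h' : τ v < τ z <;> simp_all [hside hy hz]
    have := key ha hb hab
    have := key ha hc hac
    have := key hb hc hbc
    tauto

lemma exists_mem_subsingleton_adj_of_isAcyclic [Finite W] (hH : H.IsAcyclic) {s : Finset W}
    (hs : s.Nonempty) : ∃ v ∈ s, ∀ w ∈ s, ∀ w' ∈ s, H.Adj v w → H.Adj v w' → w = w' := by
  have : Nonempty (s : Set W) := hs.coe_sort
  obtain ⟨u, _, p, hp, hmax⟩ :=
    SimpleGraph.Walk.exists_isPath_forall_isPath_length_le_length (H.induce (s : Set W))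
  -- a neighbour of the start of a longest path lies on it, hence is its second vertex
  have hsnd : ∀ w (hw : w ∈ s), H.Adj u w → (⟨w, hw⟩ : (s : Set W)) = p.snd := by
    intro w hw huw
    have hadj : (H.induce (s : Set W)).Adj u ⟨w, hw⟩ := huw
    refine (hH.induce _).eq_snd_of_adj_start hp hadj (by_contra fun hnot => ?_)
    have := hmax _ _ _ ((SimpleGraph.Walk.cons_isPath_iff hadj.symm p).mpr ⟨hp, hnot⟩)
    simp at this
  exact ⟨u, u.2, fun w hw w' hw' h h' =>
    congrArg Subtype.val ((hsnd w hw h).trans (hsnd w' hw' h').symm)⟩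

def IsNumberingOn (H : SimpleGraph W) (g : W → ℤ) (s : Finset W) : Prop :=
  Set.InjOn g s ∧ ∀ a ∈ s, ∀ b ∈ s, H.Adj a b → |g a - g b| = 1

lemma IsNumberingOn.insert [DecidableEq W] {g : W → ℤ} {s : Finset W} (hg : IsNumberingOn H g s)
    {v : W} (hv : v ∉ s) (k : ℤ) (hgap : ∀ a ∈ s, ∀ b ∈ s, H.Adj a b → g a = k → g b ≠ k + 1)
    (hnbr : ∀ w ∈ s, H.Adj v w → g w = k ∨ g w = k + 1) :
    IsNumberingOn H (fun x => if x = v then k + 1 else if g x ≤ k then g x else g x + 1)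
      (insert v s) := by
  have hvs : ∀ x ∈ s, x ≠ v := fun x hx h => hv (h ▸ hx)
  refine ⟨fun x hx y hy hxy => ?_, fun a ha b hb hab => ?_⟩
  · simp only [Finset.coe_insert, Set.mem_insert_iff, Finset.mem_coe] at hx hy
    rcases hx with rfl | hx <;> rcases hy with rfl | hy
    · rfl
    · simp only [if_neg (hvs y hy)] at hxy
      split_ifs at hxy <;> omega
    · simp only [if_neg (hvs x hx)] at hxy
      split_ifs at hxy <;> omega
    · simp only [if_neg (hvs x hx), if_neg (hvs y hy)] at hxy
      exact hg.1 hx hy (by split_ifs at hxy <;> omega)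
  · rw [Finset.mem_insert] at ha hb
    rcases ha with rfl | ha <;> rcases hb with rfl | hb
    · exact absurd rfl hab.ne
    · simp only [if_neg (hvs b hb)]
      rcases hnbr b hb hab with h | h <;> split_ifs <;> simp [abs_eq] <;> omega
    · simp only [if_neg (hvs a ha)]
      rcases hnbr a ha hab.symm with h | h <;> split_ifs <;> simp [abs_eq] <;> omega
    · simp only [if_neg (hvs a ha), if_neg (hvs b hb)]
      have h₁ := hg.2 a ha b hb hab
      have h₂ := hgap a ha b hb hab
      have h₃ := hgap b hb a ha hab.symm
      rw [abs_eq (by norm_num)] at h₁ ⊢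
      split_ifs <;> omega

lemma IsNumberingOn.exists_gap [Finite W] (hdeg : ∀ v, (H.neighborSet v).ncard ≤ 2)
    {g : W → ℤ} {s : Finset W} (hg : IsNumberingOn H g s) {v : W} (hv : v ∉ s)
    (hleaf : ∀ w ∈ s, ∀ w' ∈ s, H.Adj v w → H.Adj v w' → w = w') :
    ∃ k : ℤ, (∀ a ∈ s, ∀ b ∈ s, H.Adj a b → g a = k → g b ≠ k + 1) ∧
      ∀ w ∈ s, H.Adj v w → g w = k ∨ g w = k + 1 := by
  by_cases hw : ∃ w ∈ s, H.Adj v w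
  · obtain ⟨w, hws, hvw⟩ := hw
    by_cases hright : ∃ w' ∈ s, H.Adj w w' ∧ g w' = g w + 1
    · -- `w` already has its two neighbours `v` and `w'`, so the gap below `w` is free
      obtain ⟨w', hw's, hww', hgw'⟩ := hright
      refine ⟨g w - 1, fun a ha b hb hab hga hgb => ?_, fun x hx hvx => ?_⟩
      · obtain rfl : b = w := hg.1 hb hws (by omega)
        have h3 : 2 < (H.neighborSet b).ncard := (Set.two_lt_ncard_iff (Set.toFinite _)).mpr
          ⟨v, w', a, hvw.symm, hww', hab.symm, fun h => hv (h ▸ hw's),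
            fun h => hv (h ▸ ha), fun h => by rw [h] at hgw'; omega⟩
        exact (hdeg b).not_gt h3
      · right; rw [hleaf x hx w hws hvx hvw]; ring
    · push Not at hright
      exact ⟨g w, fun a ha b hb hab hga hgb => hright b hb (hg.1 ha hws hga ▸ hab) hgb,
        fun x hx hvx => Or.inl (by rw [hleaf x hx w hws hvx hvw])⟩
  · push Not at hw
    obtain ⟨M, hM⟩ := (s.finite_toSet.image g).bddAbove
    refine ⟨M + 1, fun a ha b _ _ hga => ?_, fun x hx hvx => absurd hvx (hw x hx)⟩
    have := hM ⟨a, ha, rfl⟩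
    omega

theorem exists_numbering_of_isLinearForest [Finite W] (hH : IsLinearForest H) :
    ∃ g : W → ℤ, Function.Injective g ∧ ∀ a b, H.Adj a b → |g a - g b| = 1 := by
  classical
  have := Fintype.ofFinite W
  have key : ∀ s : Finset W, ∃ g, IsNumberingOn H g s := by
    intro s
    induction s using Finset.strongInduction with
    | H s ih =>
      rcases s.eq_empty_or_nonempty with rfl | hs
      · exact ⟨0, by simp [IsNumberingOn]⟩
      obtain ⟨v, hvs, hleaf⟩ := exists_mem_subsingleton_adj_of_isAcyclic hH.1 hs
      obtain ⟨g, hg⟩ := ih _ (Finset.erase_ssubset hvs)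
      have hv := Finset.notMem_erase v s
      obtain ⟨k, hgap, hnbr⟩ := hg.exists_gap hH.2 hv fun w hw w' hw' =>
        hleaf w (Finset.mem_of_mem_erase hw) w' (Finset.mem_of_mem_erase hw')
      exact ⟨_, Finset.insert_erase hvs ▸ hg.insert hv k hgap hnbr⟩
  obtain ⟨g, hinj, hadj⟩ := key Finset.univ
  exact ⟨g, fun a b h => hinj (by simp) (by simp) h, fun a b h => hadj a (by simp) b (by simp) h⟩

end LinearForest

section Segments

def OnCommonPlane (S : Set (Fin 3 → ℝ)) : Prop :=
  ∃ w : Fin 3 → ℝ, w ≠ 0 ∧ ∃ δ, ∀ x ∈ S, w ⬝ᵥ x = δ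

variable {S S' : Set (Fin 3 → ℝ)} {a b c d p x : Fin 3 → ℝ}

lemma OnCommonPlane.mono (h : OnCommonPlane S') (hS : S ⊆ S') : OnCommonPlane S :=
  let ⟨w, hw, δ, hδ⟩ := h
  ⟨w, hw, δ, fun x hx => hδ x (hS hx)⟩

lemma OnCommonPlane.triple_product_eq_zero (h : OnCommonPlane {a, b, c, d}) :
    (b - a) ⬝ᵥ (c - a) ⨯₃ (d - a) = 0 := by
  obtain ⟨w, hw, δ, hδ⟩ := h
  have hrow : ∀ y ∈ ({a, b, c, d} : Set (Fin 3 → ℝ)), (y - a) ⬝ᵥ w = 0 := fun y hy => by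
    rw [sub_dotProduct, dotProduct_comm, hδ y hy, dotProduct_comm, hδ a (by simp), sub_self]
  rw [triple_product_eq_det]
  refine exists_mulVec_eq_zero_iff.mp ⟨w, hw, funext fun i => ?_⟩
  fin_cases i <;> exact hrow _ (by simp)

lemma onCommonPlane_of_mem_segment (h₁ : x ∈ segment ℝ a b) (h₂ : x ∈ segment ℝ c d) :
    OnCommonPlane {a, b, c, d} := by
  rw [segment_eq_image'] at h₁ h₂
  obtain ⟨s, -, rfl⟩ := h₁
  obtain ⟨σ, -, hσ⟩ := h₂
  -- `a + s (b - a) = c + σ (d - c)` is a nontrivial relation between `b - a`, `c - a`, `d - a`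
  have hrel : ![s, σ - 1, -σ] ᵥ* ![b - a, c - a, d - a] = 0 := by
    funext j
    have := congrFun hσ j
    simp [vecMul, dotProduct, Fin.sum_univ_three] at this ⊢
    linear_combination -this
  have hne : ![s, σ - 1, -σ] ≠ 0 := fun h => by
    have h1 := congrFun h 1
    have h2 := congrFun h 2
    simp at h1 h2
    linarith
  obtain ⟨w, hw, hMw⟩ :=
    exists_mulVec_eq_zero_iff.mpr (exists_vecMul_eq_zero_iff.mp ⟨_, hne, hrel⟩)
  refine ⟨w, hw, w ⬝ᵥ a, fun y hy => ?_⟩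
  have hrow : ∀ i, ![b - a, c - a, d - a] i ⬝ᵥ w = 0 := fun i => congrFun hMw i
  have h0 := hrow 0
  have h1 := hrow 1
  have h2 := hrow 2
  simp only [cons_val_zero, cons_val_one, cons_val_two, head_cons, tail_cons] at h0 h1 h2
  rw [sub_dotProduct, sub_eq_zero, dotProduct_comm, dotProduct_comm a] at h0 h1 h2
  simp only [Set.mem_insert_iff, Set.mem_singleton_iff] at hy
  obtain rfl | rfl | rfl | rfl := hy
  exacts [rfl, h0, h1, h2]

lemma cross_eq_zero_of_mem_segment (h₁ : x ∈ segment ℝ p a) (h₂ : x ∈ segment ℝ p b)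
    (hx : x ≠ p) : (a - p) ⨯₃ (b - p) = 0 := by
  rw [segment_eq_image'] at h₁ h₂
  obtain ⟨s, -, rfl⟩ := h₁
  obtain ⟨σ, -, hσ⟩ := h₂
  have hs : s ≠ 0 := by rintro rfl; simp at hx
  have hpar : s • (a - p) = σ • (b - p) := (add_left_cancel hσ).symm
  have : s • (a - p) ⨯₃ (b - p) = 0 := by
    rw [← LinearMap.map_smul₂, hpar, LinearMap.map_smul₂, cross_self, smul_zero]
  exact (smul_eq_zero.mp this).resolve_left hs

lemma segment_add_smul_eq_image {E : Type*} [AddCommGroup E] [Module ℝ E] (p d : E) (s t : ℝ) :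
    segment ℝ (p + s • d) (p + t • d) = (fun θ : ℝ => p + θ • d) '' uIcc s t := by
  have h : ∀ θ : ℝ, AffineMap.lineMap p (p + d) θ = p + θ • d := fun θ => by
    simp [AffineMap.lineMap_apply, add_comm]
  simp_rw [← h, ← image_segment, segment_eq_uIcc]

lemma eq_left_of_mem_segment_of_apply_two_eq (hx : x ∈ segment ℝ a b) (hxa : x 2 = a 2)
    (hb : b 2 ≠ a 2) : x = a := by
  rw [segment_eq_image'] at hx
  obtain ⟨θ, -, rfl⟩ := hx
  have : θ * (b 2 - a 2) = 0 := by simpa using hxa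
  simp [(mul_eq_zero.mp this).resolve_right (sub_ne_zero.mpr hb)]

end Segments

section SkewLines

def skewLine (γ : ℝ) : ℝ →ᵃ[ℝ] Fin 3 → ℝ := AffineMap.lineMap ![0, 0, γ] ![1, γ, γ]

lemma skewLine_apply (γ t : ℝ) : skewLine γ t = ![t, γ * t, γ] := by
  ext i
  fin_cases i <;> simp [skewLine, AffineMap.lineMap_apply, mul_comm]

lemma skewLine_injective (γ : ℝ) : Function.Injective (skewLine γ) := fun s t h => by
  simpa [skewLine_apply] using congrFun h 0

lemma exists_eq_skewLine_of_mem_segment {γ a b : ℝ} {x : Fin 3 → ℝ}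
    (hx : x ∈ segment ℝ (skewLine γ a) (skewLine γ b)) : ∃ θ ∈ uIcc a b, x = skewLine γ θ := by
  rw [← image_segment, segment_eq_uIcc] at hx
  obtain ⟨θ, hθ, rfl⟩ := hx
  exact ⟨θ, hθ, rfl⟩

lemma cross_skewLine_ne_zero {γ₁ γ₂ γ₃ t₁ t₂ t₃ : ℝ} (hγ : ¬(γ₁ = γ₂ ∧ γ₂ = γ₃))
    (ht₁₂ : t₁ ≠ t₂) (ht₁₃ : t₁ ≠ t₃) (ht₂₃ : t₂ ≠ t₃) :
    (skewLine γ₂ t₂ - skewLine γ₁ t₁) ⨯₃ (skewLine γ₃ t₃ - skewLine γ₁ t₁) ≠ 0 := by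
  intro h
  have h0 := congrFun h 0
  have h1 := congrFun h 1
  simp [skewLine_apply, cross_apply] at h0 h1
  have e₁ : (γ₁ - γ₂) * (γ₁ - γ₃) * (t₂ - t₃) = 0 := by linear_combination h0 + γ₁ * h1
  have e₂ : (γ₂ - γ₁) * (γ₂ - γ₃) * (t₃ - t₁) = 0 := by linear_combination h0 + γ₂ * h1
  have e₃ : (γ₃ - γ₁) * (γ₃ - γ₂) * (t₁ - t₂) = 0 := by linear_combination h0 + γ₃ * h1
  simp only [mul_eq_zero, sub_eq_zero] at e₁ e₂ e₃
  grind

/-- A plane through two points of one skew line contains that line, and then meets every other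
skew line in the point with one and the same parameter. -/
lemma eq_zero_of_dotProduct_skewLine {w : Fin 3 → ℝ} {δ γ γ₁ γ₂ s₁ s₂ t₁ t₂ : ℝ}
    (hs : s₁ ≠ s₂) (hγ₁ : γ₁ ≠ γ) (hγ₂ : γ₂ ≠ γ) (ht : t₁ ≠ t₂)
    (h₁ : w ⬝ᵥ skewLine γ s₁ = δ) (h₂ : w ⬝ᵥ skewLine γ s₂ = δ)
    (h₃ : w ⬝ᵥ skewLine γ₁ t₁ = δ) (h₄ : w ⬝ᵥ skewLine γ₂ t₂ = δ) : w = 0 := by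
  simp [skewLine_apply, dotProduct, Fin.sum_univ_three] at h₁ h₂ h₃ h₄
  have e₁ : w 0 + w 1 * γ = 0 := by
    have : (w 0 + w 1 * γ) * (s₁ - s₂) = 0 := by linear_combination h₁ - h₂
    exact (mul_eq_zero.mp this).resolve_right (sub_ne_zero.mpr hs)
  have e₂ : ∀ {γ' t}, γ' ≠ γ → w 0 * t + w 1 * (γ' * t) + w 2 * γ' = δ → w 1 * t + w 2 = 0 :=
    fun {γ' t} hγ' h => by
      have : (γ' - γ) * (w 1 * t + w 2) = 0 := by
        linear_combination h - h₁ + (s₁ - t) * e₁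
      exact (mul_eq_zero.mp this).resolve_left (sub_ne_zero.mpr hγ')
  have e₃ := e₂ hγ₁ h₃
  have e₄ := e₂ hγ₂ h₄
  have hw1 : w 1 = 0 := by
    have : w 1 * (t₁ - t₂) = 0 := by linear_combination e₃ - e₄
    exact (mul_eq_zero.mp this).resolve_right (sub_ne_zero.mpr ht)
  have hw2 : w 2 = 0 := by linear_combination e₃ - t₁ * hw1
  have hw0 : w 0 = 0 := by linear_combination e₁ - γ * hw1
  ext i
  fin_cases i <;> simp [hw0, hw1, hw2]

lemma not_onCommonPlane_skewLine {S : Set (Fin 3 → ℝ)} {γ γ₁ γ₂ s₁ s₂ t₁ t₂ : ℝ}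
    (hs : s₁ ≠ s₂) (hγ₁ : γ₁ ≠ γ) (hγ₂ : γ₂ ≠ γ) (ht : t₁ ≠ t₂)
    (h₁ : skewLine γ s₁ ∈ S) (h₂ : skewLine γ s₂ ∈ S) (h₃ : skewLine γ₁ t₁ ∈ S)
    (h₄ : skewLine γ₂ t₂ ∈ S) : ¬ OnCommonPlane S := fun ⟨_, hw, _, hδ⟩ =>
  hw (eq_zero_of_dotProduct_skewLine hs hγ₁ hγ₂ ht (hδ _ h₁) (hδ _ h₂) (hδ _ h₃) (hδ _ h₄))

lemma subsingleton_setOf_onCommonPlane_skewLine {γ γ₁ γ₂ γ₃ t₁ t₂ t₃ : ℝ}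
    (h₁₂ : γ₁ ≠ γ₂) (h₂ : γ₂ ≠ γ) (h₃ : γ₃ ≠ γ) (ht₁₂ : t₁ ≠ t₂) (ht₁₃ : t₁ ≠ t₃)
    (ht₂₃ : t₂ ≠ t₃) :
    {T | OnCommonPlane
      {skewLine γ T, skewLine γ₁ t₁, skewLine γ₂ t₂, skewLine γ₃ t₃}}.Subsingleton := by
  set P₁ := skewLine γ₁ t₁
  set P₂ := skewLine γ₂ t₂
  set P₃ := skewLine γ₃ t₃
  set n := (P₂ - P₁) ⨯₃ (P₃ - P₁)
  have hn : n ≠ 0 := cross_skewLine_ne_zero (fun h => h₁₂ h.1) ht₁₂ ht₁₃ ht₂₃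
  -- every plane through `P₁, P₂, P₃` is the plane with normal `n`
  have hplane : ∀ Q, (Q - P₁) ⬝ᵥ n = 0 → n ⬝ᵥ Q = n ⬝ᵥ P₁ := fun Q hQ => by
    rwa [sub_dotProduct, sub_eq_zero, dotProduct_comm, dotProduct_comm P₁] at hQ
  have hT : ∀ T, T ∈ {T | OnCommonPlane {skewLine γ T, P₁, P₂, P₃}} →
      n ⬝ᵥ skewLine γ T = n ⬝ᵥ P₁ := fun T hT =>
    hplane _ (OnCommonPlane.triple_product_eq_zero (hT.mono (by
      intro x; simp only [mem_insert_iff, mem_singleton_iff]; tauto)))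
  intro T hT' T' hT''
  by_contra hne
  exact hn (eq_zero_of_dotProduct_skewLine hne h₂ h₃ ht₂₃ (hT T hT') (hT T' hT'')
    (hplane _ (dot_self_cross _ _)) (hplane _ (dot_cross_self _ _)))

end SkewLines

section GenericPlacement

variable {V : Type*} {r : ℕ}

lemma natCast_val_injective : Function.Injective fun i : Fin r => ((i : ℕ) : ℝ) :=
  Nat.cast_injective.comp Fin.val_injective

def drawing (f : V → Fin r) (t : V → ℝ) (v : V) : Fin 3 → ℝ := skewLine ((f v : ℕ) : ℝ) (t v)

def IsGenericOn (f : V → Fin r) (t : V → ℝ) (s : Finset V) : Prop :=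
  ∀ S ⊆ s, S.card = 4 → Set.InjOn f S → ¬ OnCommonPlane (drawing f t '' S)

lemma subsingleton_setOf_onCommonPlane_insert {f : V → Fin r} {t : V → ℝ} {S : Finset V}
    (hS : S.card = 3) (hf : Set.InjOn f S) (ht : Set.InjOn t S) {i : Fin r}
    (hi : ∀ x ∈ S, f x ≠ i) :
    {T | OnCommonPlane (insert (skewLine ((i : ℕ) : ℝ) T) (drawing f t '' S))}.Subsingleton := by
  classical
  obtain ⟨x, y, z, hxy, hxz, hyz, rfl⟩ := Finset.card_eq_three.mp hS
  refine (subsingleton_setOf_onCommonPlane_skewLine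
    (natCast_val_injective.ne ((hf.ne_iff (by simp) (by simp)).mpr hxy))
    (natCast_val_injective.ne (hi y (by simp))) (natCast_val_injective.ne (hi z (by simp)))
    ((ht.ne_iff (by simp) (by simp)).mpr hxy) ((ht.ne_iff (by simp) (by simp)).mpr hxz)
    ((ht.ne_iff (by simp) (by simp)).mpr hyz)).anti fun T hT => ?_
  simpa only [drawing, Finset.coe_insert, Finset.coe_singleton, Set.image_insert_eq,
    Set.image_singleton, Set.mem_ofPred_eq] using hT

lemma finite_setOf_not_isGenericOn_update [DecidableEq V] {f : V → Fin r} {t : V → ℝ}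
    {s : Finset V} (hgen : IsGenericOn f t s) (ht : Set.InjOn t s) (a : V) :
    {T | ¬ IsGenericOn f (Function.update t a T) (insert a s)}.Finite := by
  refine ((s.powersetCard 3).finite_toSet.biUnion fun S' hS' =>
    (?_ : {T | (Set.InjOn f S' ∧ ∀ x ∈ S', f x ≠ f a) ∧
      OnCommonPlane (insert (skewLine ((f a : ℕ) : ℝ) T) (drawing f t '' S'))}.Finite)).subset ?_
  · obtain ⟨hS's, hcard⟩ := Finset.mem_powersetCard.mp hS'
    by_cases hf : Set.InjOn f S' ∧ ∀ x ∈ S', f x ≠ f a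
    · exact (subsingleton_setOf_onCommonPlane_insert hcard hf.1 (ht.mono hS's) hf.2).finite.subset
        fun T hT => hT.2
    · simp [hf]
  intro T hT
  have hT : ¬ IsGenericOn f (Function.update t a T) (insert a s) := hT
  simp only [IsGenericOn, not_forall, not_not] at hT
  obtain ⟨S, hSs, hcard, hinj, hplane⟩ := hT
  have hupd : ∀ x ∈ S, x ≠ a → drawing f (Function.update t a T) x = drawing f t x :=
    fun x _ hx => by simp only [drawing, Function.update_of_ne hx]
  by_cases haS : a ∈ S
  · refine Set.mem_biUnion (x := S.erase a) ?_
      ⟨⟨hinj.mono (by simp), fun x hx h => ?_⟩, hplane.mono ?_⟩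
    · rw [Finset.mem_coe, Finset.mem_powersetCard, Finset.card_erase_of_mem haS, hcard]
      refine ⟨fun x hx => ?_, rfl⟩
      exact (Finset.mem_insert.mp (hSs (Finset.mem_of_mem_erase hx))).resolve_left
        (Finset.ne_of_mem_erase hx)
    · exact Finset.ne_of_mem_erase hx (hinj (Finset.mem_of_mem_erase hx) haS h)
    · rintro y (rfl | ⟨x, hx, rfl⟩)
      · exact ⟨a, haS, by simp [drawing]⟩
      · exact ⟨x, Finset.mem_of_mem_erase hx,
          hupd x (Finset.mem_of_mem_erase hx) (Finset.ne_of_mem_erase hx)⟩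
  · refine absurd ?_ (hgen S ((Finset.subset_insert_iff_of_notMem haS).mp hSs) hcard hinj)
    rwa [← Set.image_congr fun x hx => hupd x hx fun h => haS (h ▸ hx)]

theorem exists_injective_isGenericOn_univ [Fintype V] (f : V → Fin r) (g : V → ℤ) :
    ∃ t : V → ℝ, Function.Injective t ∧ (∀ u v, g u < g v → t u < t v) ∧
      IsGenericOn f t Finset.univ := by
  classical
  suffices ∀ s : Finset V, ∃ t : V → ℝ, Set.InjOn t s ∧
      (∀ u ∈ s, ∀ v ∈ s, g u < g v → t u < t v) ∧ IsGenericOn f t s by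
    obtain ⟨t, hinj, hmono, hgen⟩ := this Finset.univ
    exact ⟨t, fun u v h => hinj (by simp) (by simp) h,
      fun u v h => hmono u (by simp) v (by simp) h, hgen⟩
  intro s
  induction s using Finset.strongInduction with
  | H s ih =>
    rcases s.eq_empty_or_nonempty with rfl | hs
    · refine ⟨0, by simp, by simp, fun S hS hcard => ?_⟩
      simp [Finset.subset_empty.mp hS] at hcard
    -- place the vertex with the largest number last, generically and beyond all others
    obtain ⟨a, has, hamax⟩ := s.exists_max_image g hs
    obtain ⟨t, hinj, hmono, hgen⟩ := ih _ (Finset.erase_ssubset has)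
    obtain ⟨M, hM⟩ := ((s.erase a).finite_toSet.image t).bddAbove
    obtain ⟨T, hTM, hTgen⟩ :=
      ((Set.Ioi_infinite M).sdiff (finite_setOf_not_isGenericOn_update hgen hinj a)).nonempty
    have hlt : ∀ x ∈ s.erase a, t x < T := fun x hx => (hM ⟨x, hx, rfl⟩).trans_lt hTM
    have heq : Set.EqOn t (Function.update t a T) (s.erase a) :=
      fun x hx => (Function.update_of_ne (Finset.ne_of_mem_erase hx) _ _).symm
    rw [← Finset.insert_erase has]
    refine ⟨Function.update t a T, ?_, fun u hu v hv huv => ?_, by simpa using hTgen⟩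
    · rw [Finset.coe_insert, Set.injOn_insert (by simp)]
      refine ⟨hinj.congr heq, fun ⟨x, hx, hxT⟩ => (hlt x hx).ne ?_⟩
      rwa [← heq hx, Function.update_self] at hxT
    rw [Finset.mem_insert] at hu hv
    rcases hv with rfl | hv
    · have hu := hu.resolve_left (by rintro rfl; exact lt_irrefl _ huv)
      rw [← heq hu, Function.update_self]
      exact hlt u hu
    · have hu := hu.resolve_left
        (by rintro rfl; exact (hamax v (Finset.mem_of_mem_erase hv)).not_gt huv)
      rw [← heq hu, ← heq hv]
      exact hmono u hu v hv huv

end GenericPlacement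

end LineCover

namespace WeakLineCover

open LineCover Set

variable {V : Type*} {G : SimpleGraph V} {k : ℕ}

lemma eq_of_adj_of_lt_iff_lt (C : WeakLineCover G k) {p d : Fin 3 → ℝ} (hd : d ≠ 0)
    {x a b : V} {τx τa τb : ℝ} (hx : C.pos x = p + τx • d) (ha : C.pos a = p + τa • d)
    (hb : C.pos b = p + τb • d) (hxa : G.Adj x a) (hxb : G.Adj x b) (hside : τx < τa ↔ τx < τb) :
    a = b := by
  by_contra hab
  have hτ : ∀ {y τy}, C.pos y = p + τy • d → G.Adj x y → τy ≠ τx := fun hy hxy h =>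
    hxy.ne (C.inj (by rw [hx, hy, h]))
  obtain ⟨θ, hθ, hθa, hθb⟩ := exists_ne_mem_uIcc_inter hside (hτ ha hxa) (hτ hb hxb)
  have hne : ({x, a} : Set V) ≠ {x, b} := fun h => by
    rcases Set.pair_eq_pair_iff.mp h with ⟨-, h⟩ | ⟨rfl, -⟩
    exacts [hab h, hxb.ne rfl]
  obtain ⟨w, hw₁, hw₂, hw⟩ := C.noCross hxa hxb hne (p + θ • d)
    ⟨by rw [hx, ha, segment_add_smul_eq_image]; exact ⟨θ, hθa, rfl⟩,
     by rw [hx, hb, segment_add_smul_eq_image]; exact ⟨θ, hθb, rfl⟩⟩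
  obtain rfl : w = x := by rcases hw₁ with h | rfl <;> [exact h; exact hw₂.resolve_right hab]
  rw [hx, add_right_inj] at hw
  exact hθ (smul_left_injective ℝ hd hw)

theorem exists_isLinearForest_induce (C : WeakLineCover G k) :
    ∃ f : V → Fin k, ∀ i, IsLinearForest (G.induce (f ⁻¹' {i})) := by
  choose f hf using C.coversV
  refine ⟨f, fun i => ?_⟩
  obtain ⟨p, d, hd, hL⟩ := C.isLine i
  have hpos : ∀ v : f ⁻¹' {i}, ∃ τ : ℝ, C.pos v = p + τ • d := fun v => by
    have := hf v
    rw [show f v = i from v.2, hL] at this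
    exact this
  choose τ hτ using hpos
  refine isLinearForest_of_injective (τ := τ) (fun u v h => Subtype.ext (C.inj ?_))
    fun x a b hxa hxb hside =>
      Subtype.ext (C.eq_of_adj_of_lt_iff_lt hd (hτ x) (hτ a) (hτ b) hxa hxb hside)
  rw [hτ u, hτ v, h]

end WeakLineCover

namespace LineCover

open Set

variable {V : Type*} {G : SimpleGraph V} {r : ℕ} {f : V → Fin r} {t : V → ℝ}

structure IsGoodPlacement (G : SimpleGraph V) (f : V → Fin r) (t : V → ℝ) : Prop where
  injective : Function.Injective t
  not_mem_uIcc : ∀ ⦃u v w⦄, G.Adj u v → f u = f v → f w = f u → w ≠ u → w ≠ v →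
    t w ∉ uIcc (t u) (t v)
  generic : ∀ S : Finset V, S.card = 4 → Set.InjOn f S → ¬ OnCommonPlane (drawing f t '' S)

namespace IsGoodPlacement

variable (hP : IsGoodPlacement G f t)
include hP

lemma drawing_injective : Function.Injective (drawing f t) := fun u v h =>
  hP.injective (by simpa [drawing, skewLine_apply] using congrFun h 0)

lemma eq_of_mem_segment_of_adj {p c d : V} (hpc : G.Adj p c) (hpd : G.Adj p d) (hcd : c ≠ d)
    {x : Fin 3 → ℝ} (hc : x ∈ segment ℝ (drawing f t p) (drawing f t c))
    (hd : x ∈ segment ℝ (drawing f t p) (drawing f t d)) : x = drawing f t p := by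
  by_contra hx
  by_cases hline : f c = f p ∧ f d = f p
  · rw [drawing, drawing, hline.1] at hc
    rw [drawing, drawing, hline.2] at hd
    obtain ⟨θ, hθ, rfl⟩ := exists_eq_skewLine_of_mem_segment hc
    obtain ⟨θ', hθ', hθθ'⟩ := exists_eq_skewLine_of_mem_segment hd
    obtain rfl := skewLine_injective _ hθθ'
    rcases mem_uIcc_or_mem_uIcc_of_ne hθ hθ' (fun h => hx (by rw [h]; rfl)) with h | h
    · exact hP.not_mem_uIcc hpd hline.2.symm hline.1 hpc.ne' hcd h
    · exact hP.not_mem_uIcc hpc hline.1.symm hline.2 hpd.ne' hcd.symm h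
  · refine cross_skewLine_ne_zero (fun h => hline ?_) (hP.injective.ne hpc.ne)
      (hP.injective.ne hpd.ne) (hP.injective.ne hcd) (cross_eq_zero_of_mem_segment hc hd hx)
    exact ⟨natCast_val_injective h.1.symm, natCast_val_injective (h.1.trans h.2).symm⟩

lemma not_onCommonPlane {T : Set V} {p q x y : V} (hpq : p ≠ q) (hf : f q = f p)
    (hx : f x ≠ f p) (hy : f y ≠ f p) (hxy : x ≠ y) (hpT : p ∈ T) (hqT : q ∈ T) (hxT : x ∈ T)
    (hyT : y ∈ T) : ¬ OnCommonPlane (drawing f t '' T) := by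
  have hq := mem_image_of_mem (drawing f t) hqT
  rw [drawing, hf] at hq
  exact not_onCommonPlane_skewLine (hP.injective.ne hpq) (natCast_val_injective.ne hx)
    (natCast_val_injective.ne hy) (hP.injective.ne hxy) (mem_image_of_mem _ hpT) hq
    (mem_image_of_mem _ hxT) (mem_image_of_mem _ hyT)

lemma false_of_mem_segment_of_three_in_part {u v a b : V} (huv : G.Adj u v) (hab : G.Adj a b)
    (hfv : f v = f u) (hfa : f a = f u) (hau : a ≠ u) (hav : a ≠ v) (hbu : b ≠ u) (hbv : b ≠ v)
    {x : Fin 3 → ℝ} (h₁ : x ∈ segment ℝ (drawing f t u) (drawing f t v))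
    (h₂ : x ∈ segment ℝ (drawing f t a) (drawing f t b)) : False := by
  rw [drawing, drawing, hfv] at h₁
  obtain ⟨θ, hθ, rfl⟩ := exists_eq_skewLine_of_mem_segment h₁
  by_cases hfb : f b = f u
  · rw [drawing, drawing, hfa, hfb] at h₂
    obtain ⟨θ', hθ', hθθ'⟩ := exists_eq_skewLine_of_mem_segment h₂
    obtain rfl := skewLine_injective _ hθθ'
    have hfab : f a = f b := hfa.trans hfb.symm
    rcases endpoint_mem_uIcc_of_mem_uIcc hθ hθ' with h | h | h | h
    · exact hP.not_mem_uIcc hab hfab hfa.symm hau.symm hbu.symm h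
    · exact hP.not_mem_uIcc hab hfab (hfv.trans hfa.symm) hav.symm hbv.symm h
    · exact hP.not_mem_uIcc huv hfv.symm hfa hau hav h
    · exact hP.not_mem_uIcc huv hfv.symm hfb hbu hbv h
  · -- the segment from `a` leaves the line of `u` and `v` at once
    have hxa := eq_left_of_mem_segment_of_apply_two_eq h₂
      (by simp [drawing, skewLine_apply, hfa])
      (by simpa [drawing, skewLine_apply, hfa] using natCast_val_injective.ne hfb)
    rw [drawing, hfa] at hxa
    exact hP.not_mem_uIcc huv hfv.symm hfa hau hav (skewLine_injective _ hxa ▸ hθ)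

lemma false_of_mem_segment {u v a b : V} (huv : G.Adj u v) (hab : G.Adj a b) (hua : u ≠ a)
    (hub : u ≠ b) (hva : v ≠ a) (hvb : v ≠ b) {x : Fin 3 → ℝ}
    (h₁ : x ∈ segment ℝ (drawing f t u) (drawing f t v))
    (h₂ : x ∈ segment ℝ (drawing f t a) (drawing f t b)) : False := by
  classical
  have hS : OnCommonPlane (drawing f t '' ({u, v, a, b} : Finset V)) := by
    simpa [Set.image_insert_eq] using onCommonPlane_of_mem_segment h₁ h₂
  by_cases hfv : f v = f u
  · by_cases hfa : f a = f u
    · exact hP.false_of_mem_segment_of_three_in_part huv hab hfv hfa hua.symm hva.symm hub.symm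
        hvb.symm h₁ h₂
    by_cases hfb : f b = f u
    · exact hP.false_of_mem_segment_of_three_in_part huv hab.symm hfv hfb hub.symm hvb.symm
        hua.symm hva.symm h₁ (by rwa [segment_symm])
    exact hP.not_onCommonPlane huv.ne hfv hfa hfb hab.ne (by simp) (by simp) (by simp) (by simp) hS
  by_cases hfb : f b = f a
  · by_cases hfu : f u = f a
    · exact hP.false_of_mem_segment_of_three_in_part hab huv hfb hfu hua hub hva hvb h₂ h₁
    by_cases hfv' : f v = f a
    · exact hP.false_of_mem_segment_of_three_in_part hab huv.symm hfb hfv' hva hvb hua hub h₂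
        (by rwa [segment_symm])
    exact hP.not_onCommonPlane hab.ne hfb hfu hfv' huv.ne (by simp) (by simp) (by simp) (by simp) hS
  by_cases hfa : f a = f u
  · exact hP.not_onCommonPlane hua hfa hfv (by rwa [← hfa]) hvb (by simp) (by simp) (by simp)
      (by simp) hS
  by_cases hfb' : f b = f u
  · exact hP.not_onCommonPlane hub hfb' hfv hfa hva (by simp) (by simp) (by simp) (by simp) hS
  by_cases hfav : f a = f v
  · exact hP.not_onCommonPlane hva hfav (Ne.symm hfv) (by rwa [← hfav]) hub (by simp) (by simp)
      (by simp) (by simp) hS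
  by_cases hfbv : f b = f v
  · exact hP.not_onCommonPlane hvb hfbv (Ne.symm hfv) hfav hua (by simp) (by simp) (by simp)
      (by simp) hS
  refine hP.generic {u, v, a, b}
    (Finset.card_eq_four.mpr ⟨u, v, a, b, huv.ne, hua, hub, hva, hvb, hab.ne, rfl⟩) ?_ hS
  intro x hx y hy hxy
  simp only [Finset.coe_insert, Finset.coe_singleton, Set.mem_insert_iff,
    Set.mem_singleton_iff] at hx hy
  rcases hx with rfl | rfl | rfl | rfl <;> rcases hy with rfl | rfl | rfl | rfl <;> grind

theorem nonempty_weakLineCover : Nonempty (WeakLineCover G r) := by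
  refine ⟨⟨drawing f t, hP.drawing_injective,
    fun i => {x | ∃ s : ℝ, x = ![0, 0, ((i : ℕ) : ℝ)] + s • ![1, ((i : ℕ) : ℝ), 0]},
    fun i => ⟨_, _, fun h => by simpa using congrFun h 0, rfl⟩, fun v => ⟨f v, t v, ?_⟩, ?_⟩⟩
  · ext j
    fin_cases j <;> simp [drawing, skewLine_apply, mul_comm]
  intro u v a b huv hab hne x ⟨h₁, h₂⟩
  by_cases hua : u = a
  · subst hua
    have hvb : v ≠ b := fun h => hne (h ▸ rfl)
    exact ⟨u, .inl rfl, .inl rfl, hP.eq_of_mem_segment_of_adj huv hab hvb h₁ h₂⟩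
  by_cases hub : u = b
  · subst hub
    have hva : v ≠ a := fun h => hne (by rw [h, Set.pair_comm])
    exact ⟨u, .inl rfl, .inr rfl,
      hP.eq_of_mem_segment_of_adj huv hab.symm hva h₁ (by rwa [segment_symm])⟩
  by_cases hva : v = a
  · subst hva
    have hub' : u ≠ b := fun h => hne (by rw [h, Set.pair_comm])
    exact ⟨v, .inr rfl, .inl rfl,
      hP.eq_of_mem_segment_of_adj huv.symm hab hub' (by rwa [segment_symm]) h₂⟩
  by_cases hvb : v = b
  · subst hvb
    exact ⟨v, .inr rfl, .inr rfl, hP.eq_of_mem_segment_of_adj huv.symm hab.symm hua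
      (by rwa [segment_symm]) (by rwa [segment_symm])⟩
  exact (hP.false_of_mem_segment huv hab hua hub hva hvb h₁ h₂).elim

end IsGoodPlacement

lemma exists_numbering_of_isLinearForest_induce [Finite V]
    (hf : ∀ i, IsLinearForest (G.induce (f ⁻¹' {i}))) :
    ∃ g : V → ℤ, ∀ ⦃u v⦄, f u = f v → (g u = g v → u = v) ∧ (G.Adj u v → |g u - g v| = 1) := by
  choose g hinj hadj using fun i => exists_numbering_of_isLinearForest (hf i)
  have hg : ∀ v i (h : f v = i), g (f v) ⟨v, rfl⟩ = g i ⟨v, h⟩ := by rintro v _ rfl; rfl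
  refine ⟨fun v => g (f v) ⟨v, rfl⟩, fun u v huv => ?_⟩
  simp only [hg v (f u) huv.symm]
  exact ⟨fun h => congrArg Subtype.val (hinj _ h), fun h => hadj _ _ _ h⟩

theorem exists_isGoodPlacement [Fintype V] (hf : ∀ i, IsLinearForest (G.induce (f ⁻¹' {i}))) :
    ∃ t, IsGoodPlacement G f t := by
  obtain ⟨g, hg⟩ := exists_numbering_of_isLinearForest_induce hf
  obtain ⟨t, hinj, hmono, hgen⟩ := exists_injective_isGenericOn_univ f g
  refine ⟨t, hinj, fun u v w huv hfuv hfw hwu hwv => ?_,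
    fun S hcard hinjf => hgen S (Finset.subset_univ S) hcard hinjf⟩
  -- the numbers of `u` and `v` are consecutive, so that of `w` lies outside them
  have h₁ := (hg hfuv).2 huv
  have h₂ : g w ≠ g u := fun h => hwu ((hg hfw).1 h)
  have h₃ : g w ≠ g v := fun h => hwv ((hg (hfw.trans hfuv)).1 h)
  rw [abs_eq (by norm_num)] at h₁
  rw [mem_uIcc, not_or, not_and_or, not_and_or, not_le, not_le, not_le, not_le]
  rcases (by omega : (g w < g u ∧ g w < g v) ∨ (g u < g w ∧ g v < g w)) with ⟨hu, hv⟩ | ⟨hu, hv⟩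
  · exact ⟨.inl (hmono _ _ hu), .inl (hmono _ _ hv)⟩
  · exact ⟨.inr (hmono _ _ hv), .inr (hmono _ _ hu)⟩

end LineCover

/-- For every graph `G`, `π¹_3(G)` equals the linear vertex arboricity of `G`. -/
theorem stmt_11 {V : Type*} [Fintype V] (G : SimpleGraph V) :
    pi13 G = lva G := by
  unfold pi13 lva
  congr 1
  ext k
  constructor
  · rintro ⟨C⟩
    exact C.exists_isLinearForest_induce
  · rintro ⟨f, hf⟩
    obtain ⟨t, hP⟩ := LineCover.exists_isGoodPlacement hf
    exact hP.nonempty_weakLineCover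
end

section
/- Consider the 'intersection line gadget': the graph K_{3,4} with parts {v₁,v₂,v₃} and {u₁,u₂,u₃,u₄}, together with the path edges v₁v₂ and v₂v₃. If this graph has a crossing-free straight-line drawing in ℝ³ whose vertices and edges are contained in the union of two distinct non-parallel planes, then v₁, v₂, v₃ all lie on the intersection line of the two planes and none of u₁,…,u₄ lies on that line. -/
/-- A `k`-plane cover of a graph `G` in `ℝ³`: a crossing-free straight-line drawing of
`G` contained in the union of `k` planes. -/
structure PlaneCover {V : Type*} (G : SimpleGraph V) (k : ℕ) where
  pos : V → (Fin 3 → ℝ)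
  inj : Function.Injective pos
  planes : Fin k → Set (Fin 3 → ℝ)
  isPlane : ∀ i, IsPlane (planes i)
  coversV : ∀ v, pos v ∈ ⋃ i, planes i
  coversE : ∀ ⦃u v⦄, G.Adj u v → segment ℝ (pos u) (pos v) ⊆ ⋃ i, planes i
  noCross : ∀ ⦃u v a b⦄, G.Adj u v → G.Adj a b → ({u, v} : Set V) ≠ {a, b} →
    ∀ x ∈ segment ℝ (pos u) (pos v) ∩ segment ℝ (pos a) (pos b),
      ∃ w, (w = u ∨ w = v) ∧ (w = a ∨ w = b) ∧ x = pos w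

/-- The plane cover number `ρ²_3(G)`: the minimum number of planes in `ℝ³` whose union
contains a crossing-free straight-line drawing of `G`. -/
noncomputable def rho23 {V : Type*} (G : SimpleGraph V) : ℕ :=
  sInf {k | Nonempty (PlaneCover G k)}

/-- The intersection line gadget: `K_{3,4}` with parts `{v₁,v₂,v₃}` and
`{u₁,u₂,u₃,u₄}`, together with the path edges `v₁v₂` and `v₂v₃`. -/
def gadget : SimpleGraph (Fin 3 ⊕ Fin 4) :=
  completeBipartiteGraph (Fin 3) (Fin 4) ⊔
    SimpleGraph.fromEdgeSet
      {s(Sum.inl 0, Sum.inl 1), s(Sum.inl 1, Sum.inl 2)}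

/-!
Every edge lies in one of the two planes, so a vertex off the line `ℓ = P₀ ∩ P₁` has all its
neighbours in its own plane. If some `vᵢ` lies in `P₀ \ ℓ`, all `uⱼ` lie in `P₀`. Either every
vertex lies in `P₀`, which is impossible because the gadget has no crossing-free straight-line
drawing in a plane, or some `v_k` lies in `P₁ \ ℓ`; then `v₂` and all `uⱼ` lie on `ℓ`, and two
of the edges `v₂u₁, v₂u₂, v₂u₃` overlap on the line. Once all `vᵢ` are on `ℓ`, a `uⱼ` on `ℓ`
makes two of the edges `v₂v₁, v₂v₃, v₂uⱼ` overlap in the same way.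

In the plane, two of the triangles `v₁v₂uⱼ` lie on the same side of `v₁v₂`, and the absence of
crossings forces one of them to contain the apex of the other; the edges `uₖv₃` and `v₃uₘ` then
trap `v₃` and every other `uₘ` inside the triangle `v₁v₂uⱼ`. The same argument on the base
`v₃v₂` traps `v₁` inside some triangle `v₃v₂u_p`, and comparing barycentric coordinates puts
`v₁` on the edge `v₂u_p` (if `p = j`) or `uⱼ` on the edge `v₁v₂` (if `p ≠ j`).
-/

open Function Set

theorem Real.exists_mem_segment_of_fin_three (c : ℝ) (x : Fin 3 → ℝ) :
    ∃ i j, i ≠ j ∧ x i ∈ segment ℝ c (x j) := by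
  obtain ⟨i, j, hij, hside⟩ :=
    Fintype.exists_ne_map_eq_of_card_lt (fun i => decide (x i < c)) (by simp)
  simp only [decide_eq_decide] at hside
  simp only [segment_eq_uIcc, mem_uIcc]
  rcases lt_or_ge (x i) c with hc | hc
  · rcases le_total (x i) (x j) with h | h
    · exact ⟨j, i, hij.symm, Or.inr ⟨h, (hside.mp hc).le⟩⟩
    · exact ⟨i, j, hij, Or.inr ⟨h, hc.le⟩⟩
  · have hcj : c ≤ x j := not_lt.mp fun hj => (not_lt.mpr hc) (hside.mpr hj)
    rcases le_total (x i) (x j) with h | h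
    · exact ⟨i, j, hij, Or.inl ⟨hc, h⟩⟩
    · exact ⟨j, i, hij.symm, Or.inl ⟨hcj, h⟩⟩

section Drawing

variable {V E : Type*} [AddCommGroup E] [Module ℝ E]

/-- The `noCross` condition of `PlaneCover`, for drawings in any real vector space. -/
def CrossingFree (G : SimpleGraph V) (pos : V → E) : Prop :=
  ∀ ⦃u v a b⦄, G.Adj u v → G.Adj a b → ({u, v} : Set V) ≠ {a, b} →
    ∀ x ∈ segment ℝ (pos u) (pos v) ∩ segment ℝ (pos a) (pos b),
      ∃ w, (w = u ∨ w = v) ∧ (w = a ∨ w = b) ∧ x = pos w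

namespace CrossingFree

variable {G : SimpleGraph V} {pos : V → E}

theorem disjoint_segment (h : CrossingFree G pos) {a b c d : V} (hab : G.Adj a b)
    (hcd : G.Adj c d) (hac : a ≠ c) (had : a ≠ d) (hbc : b ≠ c) (hbd : b ≠ d) :
    Disjoint (segment ℝ (pos a) (pos b)) (segment ℝ (pos c) (pos d)) := by
  refine Set.disjoint_left.mpr fun x hxab hxcd => ?_
  have hne : ({a, b} : Set V) ≠ {c, d} := by
    intro hs
    have ha : a ∈ ({c, d} : Set V) := hs ▸ mem_insert a {b}
    rcases ha with rfl | rfl <;> contradiction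
  obtain ⟨w, hw, hw', -⟩ := h hab hcd hne x ⟨hxab, hxcd⟩
  rcases hw with rfl | rfl <;> rcases hw' with rfl | rfl <;> contradiction

theorem eq_of_mem_segment (h : CrossingFree G pos) {a b c : V} (hab : G.Adj a b)
    (hac : G.Adj a c) (hbc : b ≠ c) {x : E} (hxb : x ∈ segment ℝ (pos a) (pos b))
    (hxc : x ∈ segment ℝ (pos a) (pos c)) : x = pos a := by
  have hne : ({a, b} : Set V) ≠ {a, c} := by
    intro hs
    have hb : b ∈ ({a, c} : Set V) := hs ▸ mem_insert_of_mem a rfl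
    rcases hb with rfl | rfl
    · exact hab.ne rfl
    · exact hbc rfl
  obtain ⟨w, hw, hw', rfl⟩ := h hab hac hne x ⟨hxb, hxc⟩
  rcases hw with rfl | rfl
  · rfl
  · rcases hw' with rfl | rfl
    · exact (hab.ne rfl).elim
    · exact (hbc rfl).elim

theorem pos_not_mem_segment (h : CrossingFree G pos) {a b w x : V} (hab : G.Adj a b)
    (hwx : G.Adj w x) (hwa : w ≠ a) (hwb : w ≠ b) (hxa : x ≠ a) (hxb : x ≠ b) :
    pos w ∉ segment ℝ (pos a) (pos b) := fun hw =>
  Set.disjoint_left.mp (h.disjoint_segment hab hwx hwa.symm hxa.symm hwb.symm hxb.symm) hw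
    (left_mem_segment ℝ _ _)

theorem of_comp {E' : Type*} [AddCommGroup E'] [Module ℝ E'] {f : E' →ᵃ[ℝ] E}
    (hf : Injective f) {pos : V → E'} (h : CrossingFree G (f ∘ pos)) : CrossingFree G pos := by
  intro u v a b huv hab hne x ⟨hxuv, hxab⟩
  have hmem : ∀ {y z : E'}, x ∈ segment ℝ y z → f x ∈ segment ℝ (f y) (f z) := fun hx =>
    image_segment ℝ f _ _ ▸ mem_image_of_mem f hx
  obtain ⟨w, hw, hw', hxw⟩ := h huv hab hne (f x) ⟨hmem hxuv, hmem hxab⟩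
  exact ⟨w, hw, hw', hf hxw⟩

theorem false_of_star_of_mem_range (h : CrossingFree G pos) (hinj : Injective pos)
    {g : ℝ →ᵃ[ℝ] E} {c : V} {l : Fin 3 → V} (hl : Injective l) (hadj : ∀ i, G.Adj c (l i))
    (hc : pos c ∈ range g) (hlg : ∀ i, pos (l i) ∈ range g) : False := by
  obtain ⟨t, ht⟩ := hc
  choose x hx using hlg
  obtain ⟨i, j, hij, hmem⟩ := Real.exists_mem_segment_of_fin_three t x
  have hseg : pos (l i) ∈ segment ℝ (g t) (pos (l j)) := by
    rw [← hx i, ← hx j, ← image_segment]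
    exact mem_image_of_mem g hmem
  rw [ht] at hseg
  have := h.eq_of_mem_segment (hadj i) (hadj j) (hl.ne hij) (right_mem_segment ℝ _ _) hseg
  exact (hadj i).ne (hinj this).symm

end CrossingFree

end Drawing

section Triangle

variable {E : Type*} [AddCommGroup E] [Module ℝ E]

def openTriangle (p q r : E) : Set E :=
  {x | ∃ α β γ : ℝ, 0 < α ∧ 0 < β ∧ 0 < γ ∧ α + β + γ = 1 ∧ α • p + β • q + γ • r = x}

theorem openTriangle_comm₁₂ (p q r : E) : openTriangle q p r = openTriangle p q r := by
  ext x
  constructor <;> rintro ⟨α, β, γ, hα, hβ, hγ, hs, rfl⟩ <;>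
    exact ⟨β, α, γ, hβ, hα, hγ, by linarith, by abel⟩

theorem openTriangle_comm₂₃ (p q r : E) : openTriangle p r q = openTriangle p q r := by
  ext x
  constructor <;> rintro ⟨α, β, γ, hα, hβ, hγ, hs, rfl⟩ <;>
    exact ⟨α, γ, β, hα, hγ, hβ, by linarith, by abel⟩

theorem mem_segment_of_smul_eq {S A B : ℝ} {x p q : E} (hA : 0 ≤ A) (hB : 0 ≤ B) (hS : 0 < S)
    (hsum : A + B = S) (h : S • x = A • p + B • q) : x ∈ segment ℝ p q := by
  refine ⟨A / S, B / S, by positivity, by positivity, by field_simp; linarith, ?_⟩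
  apply smul_right_injective E hS.ne'
  simp only [smul_add, smul_smul, mul_div_cancel₀ _ hS.ne', h]

theorem mem_openTriangle_of_smul_eq {S A B C : ℝ} {x p q r : E} (hA : 0 < A) (hB : 0 < B)
    (hC : 0 < C) (hsum : A + B + C = S) (h : S • x = A • p + B • q + C • r) :
    x ∈ openTriangle p q r := by
  have hS : 0 < S := by linarith
  refine ⟨A / S, B / S, C / S, by positivity, by positivity, by positivity,
    by field_simp; linarith, ?_⟩
  apply smul_right_injective E hS.ne'
  simp only [smul_add, smul_smul, mul_div_cancel₀ _ hS.ne', h]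

theorem mem_segment_of_mutual_mem_openTriangle {a b c x : E} (hc : c ∈ openTriangle a b x)
    (ha : a ∈ openTriangle c b x) : a ∈ segment ℝ b x := by
  obtain ⟨α, β, γ, hα, hβ, hγ, hs, rfl⟩ := hc
  obtain ⟨α', β', γ', hα', hβ', hγ', hs', ha⟩ := ha
  have hαα' : α' * α < 1 := by nlinarith
  refine mem_segment_of_smul_eq (S := 1 - α' * α) (A := α' * β + β') (B := α' * γ + γ')
    (by positivity) (by positivity) (by linarith)
    (by linear_combination α' * hs + hs') ?_
  linear_combination (norm := module) -ha

theorem mem_segment_of_mem_openTriangle_of_mem_openTriangle {a b c x y : E}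
    (hc : c ∈ openTriangle a b x) (hy : y ∈ openTriangle a b x) (hx : x ∈ openTriangle c b y) :
    x ∈ segment ℝ a b := by
  obtain ⟨α, β, γ, hα, hβ, hγ, hs, rfl⟩ := hc
  obtain ⟨α', β', γ', hα', hβ', hγ', hs', rfl⟩ := hy
  obtain ⟨α'', β'', γ'', hα'', hβ'', hγ'', hs'', hx⟩ := hx
  have hlt : α'' * γ + γ'' * γ' < 1 := by nlinarith
  refine mem_segment_of_smul_eq (S := 1 - α'' * γ - γ'' * γ') (A := α'' * α + γ'' * α')
    (B := α'' * β + β'' + γ'' * β') (by positivity) (by positivity) (by linarith)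
    (by linear_combination α'' * hs + γ'' * hs' + hs'') ?_
  linear_combination (norm := module) -hx

end Triangle

section Orientation

/-- Twice the signed area of the triangle `p q r`: positive iff it is counterclockwise. -/
def orient (p q r : ℝ × ℝ) : ℝ := (q.1 - p.1) * (r.2 - p.2) - (q.2 - p.2) * (r.1 - p.1)

theorem orient_rotate (p q r : ℝ × ℝ) : orient q r p = orient p q r := by
  unfold orient; ring

theorem orient_swap₁₂ (p q r : ℝ × ℝ) : orient q p r = -orient p q r := by
  unfold orient; ring

theorem orient_swap₂₃ (p q r : ℝ × ℝ) : orient p r q = -orient p q r := by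
  unfold orient; ring

theorem orient_add_orient_add_orient (p q r x : ℝ × ℝ) :
    orient x q r + orient p x r + orient p q x = orient p q r := by
  unfold orient; ring

/-- Cramer's rule: the barycentric coordinates of `x` are the three sub-areas. -/
theorem orient_smul_eq (p q r x : ℝ × ℝ) :
    orient p q r • x = orient x q r • p + orient p x r • q + orient p q x • r := by
  ext <;> simp only [orient, Prod.fst_add, Prod.snd_add, Prod.smul_fst, Prod.smul_snd,
    smul_eq_mul] <;> ring

theorem orient_add_smul_right {a b : ℝ} (hab : a + b = 1) (p q x y : ℝ × ℝ) :
    orient p q (a • x + b • y) = a * orient p q x + b * orient p q y := by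
  obtain rfl : b = 1 - a := by linarith
  simp only [orient, Prod.fst_add, Prod.snd_add, Prod.smul_fst, Prod.smul_snd, smul_eq_mul]
  ring

theorem orient_add_smul_left {a b : ℝ} (hab : a + b = 1) (p q x y : ℝ × ℝ) :
    orient (a • x + b • y) p q = a * orient x p q + b * orient y p q := by
  rw [← orient_rotate (a • x + b • y) p q, orient_add_smul_right hab, orient_rotate x,
    orient_rotate y]

theorem orient_add_smul_mid {a b : ℝ} (hab : a + b = 1) (p q x y : ℝ × ℝ) :
    orient p (a • x + b • y) q = a * orient p x q + b * orient p y q := by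
  rw [← orient_rotate p (a • x + b • y) q, orient_add_smul_left hab, orient_rotate p x q,
    orient_rotate p y q]

theorem mem_openTriangle_iff {p q r x : ℝ × ℝ} (hD : 0 < orient p q r) :
    x ∈ openTriangle p q r ↔ 0 < orient x q r ∧ 0 < orient p x r ∧ 0 < orient p q x := by
  constructor
  · rintro ⟨α, β, γ, hα, hβ, hγ, hs, rfl⟩
    obtain rfl : γ = 1 - α - β := by linarith
    simp only [orient, Prod.fst_add, Prod.snd_add, Prod.smul_fst, Prod.smul_snd, smul_eq_mul]
      at hD ⊢
    refine ⟨?_, ?_, ?_⟩ <;> nlinarith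
  · rintro ⟨h₁, h₂, h₃⟩
    exact mem_openTriangle_of_smul_eq h₁ h₂ h₃ (orient_add_orient_add_orient p q r x)
      (orient_smul_eq p q r x)

theorem mem_sides_of_orient_nonneg {p q r z : ℝ × ℝ} (hD : 0 < orient p q r)
    (h₀ : 0 ≤ orient z q r) (h₁ : 0 ≤ orient p z r) (h₂ : 0 ≤ orient p q z)
    (hzero : orient z q r = 0 ∨ orient p z r = 0 ∨ orient p q z = 0) :
    z ∈ segment ℝ q r ∨ z ∈ segment ℝ p r ∨ z ∈ segment ℝ p q := by
  have hsum := orient_add_orient_add_orient p q r z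
  have hz := orient_smul_eq p q r z
  rcases hzero with h | h | h
  · exact Or.inl (mem_segment_of_smul_eq h₁ h₂ hD (by linarith)
      (by rw [hz, h, zero_smul, zero_add]))
  · exact Or.inr (Or.inl (mem_segment_of_smul_eq h₀ h₂ hD (by linarith)
      (by rw [hz, h, zero_smul, add_zero])))
  · exact Or.inr (Or.inr (mem_segment_of_smul_eq h₀ h₁ hD (by linarith)
      (by rw [hz, h, zero_smul, add_zero])))

theorem collinear_of_orient_eq_zero {x y z : ℝ × ℝ} (h : orient x y z = 0) :
    Collinear ℝ {x, y, z} := by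
  by_cases hxy : x = y
  · subst hxy
    simpa using collinear_pair ℝ x z
  have hd : (y.1 - x.1) ^ 2 + (y.2 - x.2) ^ 2 ≠ 0 := by
    intro h0
    exact hxy (Prod.ext (by nlinarith) (by nlinarith))
  have hz : z ∈ line[ℝ, x, y] := by
    -- the parameter of `z` on the line `x y` comes from orthogonal projection
    convert AffineMap.lineMap_mem_affineSpan_pair
      (((z.1 - x.1) * (y.1 - x.1) + (z.2 - x.2) * (y.2 - x.2)) /
        ((y.1 - x.1) ^ 2 + (y.2 - x.2) ^ 2)) x y
    unfold orient at h
    ext <;> simp only [AffineMap.lineMap_apply_module', Prod.fst_add, Prod.snd_add,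
      Prod.smul_fst, Prod.smul_snd, Prod.fst_sub, Prod.snd_sub, smul_eq_mul] <;> field_simp
    · linear_combination (x.2 - y.2) * h
    · linear_combination (y.1 - x.1) * h
  have := collinear_insert_of_mem_affineSpan_pair hz
  rwa [Set.insert_comm, Set.pair_comm] at this

theorem orient_pos_of_mem_segment {p q a b x : ℝ × ℝ} (ha : 0 < orient p q a)
    (hb : 0 < orient p q b) (hx : x ∈ segment ℝ a b) : 0 < orient p q x := by
  obtain ⟨α, β, hα, hβ, hs, rfl⟩ := hx
  rw [orient_add_smul_right hs]
  rcases hα.eq_or_lt with rfl | hα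
  · obtain rfl : β = 1 := by linarith
    linarith
  · exact add_pos_of_pos_of_nonneg (mul_pos hα ha) (mul_nonneg hβ hb.le)

theorem segment_inter_nonempty_of_orient_mul_neg {a b c d : ℝ × ℝ}
    (hab : orient a b c * orient a b d < 0) (hcd : orient c d a * orient c d b < 0) :
    (segment ℝ a b ∩ segment ℝ c d).Nonempty := by
  wlog ha : orient c d a < 0 generalizing a b
  · rw [segment_symm]
    refine this (by rwa [orient_swap₁₂, orient_swap₁₂ a, neg_mul_neg]) (by linarith) ?_
    nlinarith
  have hb : 0 < orient c d b := by nlinarith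
  have hsum : orient c d b - orient c d a = orient a b c - orient a b d := by
    unfold orient; ring
  have hc : 0 < orient a b c := by nlinarith
  have hd : orient a b d < 0 := by nlinarith
  set S := orient c d b - orient c d a
  have hS : 0 < S := by linarith
  -- the crossing point divides `a b` in the ratio `-orient c d a : orient c d b`, and by a
  -- four-point identity it divides `d c` in the ratio `orient a b c : -orient a b d`
  refine ⟨S⁻¹ • (orient c d b • a + (-orient c d a) • b), ?_, ?_⟩
  · exact mem_segment_of_smul_eq hb.le (by linarith) hS (by ring) (smul_inv_smul₀ hS.ne' _)
  · refine mem_segment_of_smul_eq (neg_nonneg.mpr hd.le) hc.le hS (by linarith) ?_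
    rw [smul_inv_smul₀ hS.ne']
    ext <;> simp only [orient, Prod.fst_add, Prod.snd_add, Prod.smul_fst, Prod.smul_snd,
      smul_eq_mul] <;> ring

theorem orient_ne_zero_of_disjoint {p q a b : ℝ × ℝ} (hpa : 0 < orient p q a)
    (hpb : 0 < orient p q b) (h₁ : Disjoint (segment ℝ a p) (segment ℝ b q))
    (h₂ : Disjoint (segment ℝ a q) (segment ℝ b p)) : orient q a b ≠ 0 ∧ orient a p b ≠ 0 := by
  constructor <;> intro h0
  · rcases (collinear_of_orient_eq_zero h0).wbtw_or_wbtw_or_wbtw with h | h | h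
    · exact Set.disjoint_left.mp h₁ (left_mem_segment ℝ a p)
        (segment_symm ℝ q b ▸ h.mem_segment)
    · exact Set.disjoint_left.mp h₂ h.mem_segment (left_mem_segment ℝ b p)
    · have := orient_pos_of_mem_segment hpb hpa h.mem_segment
      unfold orient at this
      linarith
  · rcases (collinear_of_orient_eq_zero h0).wbtw_or_wbtw_or_wbtw with h | h | h
    · have := orient_pos_of_mem_segment (q := q) hpa hpb h.mem_segment
      unfold orient at this
      linarith
    · exact Set.disjoint_left.mp h₁ (segment_symm ℝ p a ▸ h.mem_segment)
        (left_mem_segment ℝ b q)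
    · exact Set.disjoint_left.mp h₂ (left_mem_segment ℝ a q) h.mem_segment

theorem mem_openTriangle_or_of_disjoint {p q a b : ℝ × ℝ}
    (hside : 0 < orient p q a * orient p q b) (h₁ : Disjoint (segment ℝ a p) (segment ℝ b q))
    (h₂ : Disjoint (segment ℝ a q) (segment ℝ b p)) :
    b ∈ openTriangle p q a ∨ a ∈ openTriangle p q b := by
  wlog hpa : 0 < orient p q a generalizing p q
  · rw [← openTriangle_comm₁₂ p, ← openTriangle_comm₁₂ p]
    refine this (by rwa [orient_swap₁₂ p q a, orient_swap₁₂ p q b, neg_mul_neg]) h₂ h₁ ?_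
    rw [orient_swap₁₂ p q a]
    exact neg_pos.mpr ((not_lt.mp hpa).lt_of_ne (left_ne_zero_of_mul hside.ne'))
  have hpb : 0 < orient p q b := pos_of_mul_pos_right hside hpa.le
  obtain ⟨h_qab, h_apb⟩ := orient_ne_zero_of_disjoint hpa hpb h₁ h₂
  rcases h_qab.lt_or_gt with h₃ | h₃ <;> rcases h_apb.lt_or_gt with h₄ | h₄
  · right
    rw [mem_openTriangle_iff hpb, show orient a q b = -orient q a b by unfold orient; ring,
      show orient p a b = -orient a p b by unfold orient; ring]
    exact ⟨by linarith, by linarith, hpa⟩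
  · obtain ⟨x, hbp, haq⟩ :=
      segment_inter_nonempty_of_orient_mul_neg (a := b) (b := p) (c := a) (d := q)
      (by rw [show orient b p a = -orient a p b by unfold orient; ring,
        show orient b p q = orient p q b by unfold orient; ring]; nlinarith)
      (by rw [show orient a q b = -orient q a b by unfold orient; ring,
        show orient a q p = -orient p q a by unfold orient; ring]; nlinarith)
    exact (Set.disjoint_left.mp h₂ haq hbp).elim
  · obtain ⟨x, hap, hbq⟩ :=
      segment_inter_nonempty_of_orient_mul_neg (a := a) (b := p) (c := b) (d := q)
      (by rw [show orient a p q = orient p q a by unfold orient; ring]; nlinarith)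
      (by rw [show orient b q a = orient q a b by unfold orient; ring,
        show orient b q p = -orient p q b by unfold orient; ring]; nlinarith)
    exact (Set.disjoint_left.mp h₁ hap hbq).elim
  · left
    rw [mem_openTriangle_iff hpa, show orient b q a = orient q a b by unfold orient; ring,
      show orient p b a = orient a p b by unfold orient; ring]
    exact ⟨h₃, h₄, hpb⟩

theorem exists_first_zero {ι : Type*} [Finite ι] {A B : ι → ℝ} (hA : ∀ i, 0 < A i)
    (hB : ∃ i, B i ≤ 0) :
    ∃ t ∈ Ioc (0 : ℝ) 1, ∃ i, (1 - t) * A i + t * B i = 0 ∧ ∀ j, 0 ≤ (1 - t) * A j + t * B j := by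
  obtain ⟨i₀, hi₀⟩ := hB
  have : Nonempty ι := ⟨i₀⟩
  obtain ⟨i, hi⟩ := Finite.exists_min fun i => B i / A i
  -- the first coordinate to vanish is the one minimising `B i / A i`
  have hr : B i / A i ≤ 0 := (hi i₀).trans (div_nonpos_of_nonpos_of_nonneg hi₀ (hA i₀).le)
  set t := (1 - B i / A i)⁻¹
  have ht : t * (1 - B i / A i) = 1 := inv_mul_cancel₀ (by linarith)
  have key : ∀ j, (1 - t) * A j + t * B j = t * A j * (B j / A j - B i / A i) := by
    intro j
    rw [mul_sub, mul_assoc t, mul_div_cancel₀ _ (hA j).ne']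
    linear_combination (-A j) * ht
  refine ⟨t, ⟨inv_pos.mpr (by linarith), inv_le_one_of_one_le₀ (by linarith)⟩, i, ?_,
    fun j => ?_⟩
  · rw [key, sub_self, mul_zero]
  · rw [key]
    exact mul_nonneg (mul_nonneg (inv_pos.mpr (by linarith)).le (hA j).le) (sub_nonneg.mpr (hi j))

theorem mem_openTriangle_of_disjoint {p q r x y : ℝ × ℝ} (hD : orient p q r ≠ 0)
    (hx : x ∈ openTriangle p q r) (hpq : Disjoint (segment ℝ x y) (segment ℝ p q))
    (hqr : Disjoint (segment ℝ x y) (segment ℝ q r))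
    (hpr : Disjoint (segment ℝ x y) (segment ℝ p r)) : y ∈ openTriangle p q r := by
  wlog hpos : 0 < orient p q r generalizing q r
  · have hneg : 0 < orient p r q := by
      rw [orient_swap₂₃]
      exact neg_pos.mpr ((not_lt.mp hpos).lt_of_ne hD)
    rw [← openTriangle_comm₂₃] at hx ⊢
    exact this hneg.ne' hx hpr (segment_symm ℝ q r ▸ hqr) hpq hneg
  by_contra hy
  let A : Fin 3 → ℝ := ![orient x q r, orient p x r, orient p q x]
  let B : Fin 3 → ℝ := ![orient y q r, orient p y r, orient p q y]
  have hA : ∀ i, 0 < A i := by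
    obtain ⟨h₀, h₁, h₂⟩ := (mem_openTriangle_iff hpos).mp hx
    intro i; fin_cases i <;> assumption
  have hB : ∃ i, B i ≤ 0 := by
    by_contra! h
    exact hy ((mem_openTriangle_iff hpos).mpr ⟨h 0, h 1, h 2⟩)
  obtain ⟨t, ⟨ht₀, ht₁⟩, i, hi, hnonneg⟩ := exists_first_zero hA hB
  set z := (1 - t) • x + t • y
  have hz : z ∈ segment ℝ x y := ⟨1 - t, t, by linarith, ht₀.le, by ring, rfl⟩
  have hs : 1 - t + t = 1 := by ring
  have hcomb : ∀ j, (1 - t) * A j + t * B j = ![orient z q r, orient p z r, orient p q z] j := by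
    intro j
    fin_cases j <;> simp [A, B, z, orient_add_smul_left hs, orient_add_smul_mid hs,
      orient_add_smul_right hs]
  simp only [hcomb] at hi hnonneg
  have hzero : orient z q r = 0 ∨ orient p z r = 0 ∨ orient p q z = 0 := by
    fin_cases i <;> simp_all
  rcases mem_sides_of_orient_nonneg hpos (hnonneg 0) (hnonneg 1) (hnonneg 2) hzero with h | h | h
  exacts [Set.disjoint_left.mp hqr hz h, Set.disjoint_left.mp hpr hz h,
    Set.disjoint_left.mp hpq hz h]

theorem CrossingFree.mem_openTriangle_of_adj {V : Type*} {G : SimpleGraph V}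
    {pos : V → ℝ × ℝ} (h : CrossingFree G pos) {p q r x y : V} (hpq : G.Adj p q)
    (hqr : G.Adj q r) (hpr : G.Adj p r) (hxy : G.Adj x y) (hxp : x ≠ p) (hxq : x ≠ q)
    (hxr : x ≠ r) (hyp : y ≠ p) (hyq : y ≠ q) (hyr : y ≠ r)
    (hD : orient (pos p) (pos q) (pos r) ≠ 0) (hx : pos x ∈ openTriangle (pos p) (pos q) (pos r)) :
    pos y ∈ openTriangle (pos p) (pos q) (pos r) :=
  mem_openTriangle_of_disjoint hD hx (h.disjoint_segment hxy hpq hxp hxq hyp hyq)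
    (h.disjoint_segment hxy hqr hxq hxr hyq hyr) (h.disjoint_segment hxy hpr hxp hxr hyp hyr)

end Orientation

section Gadget

theorem gadget_adj_iff {a b : Fin 3 ⊕ Fin 4} :
    gadget.Adj a b ↔
      a.isLeft ≠ b.isLeft ∨ s(a, b) = s(.inl 0, .inl 1) ∨ s(a, b) = s(.inl 1, .inl 2) := by
  cases a <;> cases b <;> simp [gadget]
  rintro ((⟨rfl, rfl⟩ | ⟨rfl, rfl⟩) | ⟨rfl, rfl⟩ | ⟨rfl, rfl⟩) <;> decide

instance : DecidableRel gadget.Adj := fun _ _ => decidable_of_iff _ gadget_adj_iff.symm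

theorem gadget_adj_inl_inr (i : Fin 3) (j : Fin 4) : gadget.Adj (.inl i) (.inr j) := by
  revert i j; decide

theorem gadget_exists_adj_ne (w a b : Fin 3 ⊕ Fin 4) : ∃ x, gadget.Adj w x ∧ x ≠ a ∧ x ≠ b := by
  revert w a b; decide

theorem gadget_adj_inl_one {i k : Fin 3} (hik : i ≠ k) (h : ¬gadget.Adj (.inl i) (.inl k)) :
    gadget.Adj (.inl 1) (.inl i) ∧ gadget.Adj (.inl 1) (.inl k) := by
  revert i k; decide

theorem gadget_star_inl_one (j : Fin 4) :
    Injective ![(.inl 0 : Fin 3 ⊕ Fin 4), .inl 2, .inr j] ∧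
      ∀ i, gadget.Adj (.inl 1) (![.inl 0, .inl 2, .inr j] i) := by
  revert j; decide

variable {E : Type*} [AddCommGroup E] [Module ℝ E]

theorem CrossingFree.gadget_pos_not_mem_segment {pos : Fin 3 ⊕ Fin 4 → E}
    (h : CrossingFree gadget pos) {a b w : Fin 3 ⊕ Fin 4} (hab : gadget.Adj a b) (hwa : w ≠ a)
    (hwb : w ≠ b) : pos w ∉ segment ℝ (pos a) (pos b) := by
  obtain ⟨x, hwx, hxa, hxb⟩ := gadget_exists_adj_ne w a b
  exact h.pos_not_mem_segment hab hwx hwa hwb hxa hxb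

variable {pos : Fin 3 ⊕ Fin 4 → ℝ × ℝ}

theorem CrossingFree.gadget_orient_ne_zero (h : CrossingFree gadget pos)
    {a b c : Fin 3 ⊕ Fin 4} (hab : gadget.Adj a b) (hbc : gadget.Adj b c) (hac : gadget.Adj a c) :
    orient (pos a) (pos b) (pos c) ≠ 0 := by
  intro h0
  rcases (collinear_of_orient_eq_zero h0).wbtw_or_wbtw_or_wbtw with h' | h' | h'
  · exact h.gadget_pos_not_mem_segment hac hab.ne' hbc.ne h'.mem_segment
  · exact h.gadget_pos_not_mem_segment hab.symm hbc.ne' hac.ne' h'.mem_segment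
  · exact h.gadget_pos_not_mem_segment hbc.symm hac.ne hab.ne h'.mem_segment

theorem CrossingFree.gadget_exists_nested (h : CrossingFree gadget pos) {a b : Fin 3}
    (hab : gadget.Adj (.inl a) (.inl b)) :
    ∃ j k, j ≠ k ∧
      pos (.inr k) ∈ openTriangle (pos (.inl a)) (pos (.inl b)) (pos (.inr j)) := by
  obtain ⟨j, k, hjk, hside⟩ := Fintype.exists_ne_map_eq_of_card_lt
    (fun j => decide (0 < orient (pos (.inl a)) (pos (.inl b)) (pos (.inr j)))) (by simp)
  simp only [decide_eq_decide] at hside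
  have hD : ∀ j, orient (pos (.inl a)) (pos (.inl b)) (pos (.inr j)) ≠ 0 := fun j =>
    h.gadget_orient_ne_zero hab (gadget_adj_inl_inr b j) (gadget_adj_inl_inr a j)
  have hprod : 0 < orient (pos (.inl a)) (pos (.inl b)) (pos (.inr j)) *
      orient (pos (.inl a)) (pos (.inl b)) (pos (.inr k)) := by
    rcases (hD j).lt_or_gt with hj | hj
    · exact mul_pos_of_neg_of_neg hj
        ((not_lt.mp fun hk => (not_lt.mpr hj.le) (hside.mpr hk)).lt_of_ne (hD k))
    · exact mul_pos hj (hside.mp hj)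
  have hne : (.inr j : Fin 3 ⊕ Fin 4) ≠ .inr k := by simpa using hjk
  rcases mem_openTriangle_or_of_disjoint hprod
      (h.disjoint_segment (gadget_adj_inl_inr a j).symm (gadget_adj_inl_inr b k).symm hne
        (by simp) (by simp) hab.ne)
      (h.disjoint_segment (gadget_adj_inl_inr b j).symm (gadget_adj_inl_inr a k).symm hne
        (by simp) (by simp) hab.ne') with hk | hj
  · exact ⟨j, k, hjk, hk⟩
  · exact ⟨k, j, hjk.symm, hj⟩

theorem CrossingFree.gadget_exists_enclosing (h : CrossingFree gadget pos) {a b c : Fin 3}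
    (hab : gadget.Adj (.inl a) (.inl b)) (hca : c ≠ a) (hcb : c ≠ b) :
    ∃ j, pos (.inl c) ∈ openTriangle (pos (.inl a)) (pos (.inl b)) (pos (.inr j)) ∧
      ∀ m ≠ j, pos (.inr m) ∈ openTriangle (pos (.inl a)) (pos (.inl b)) (pos (.inr j)) := by
  obtain ⟨j, k, hjk, hk⟩ := h.gadget_exists_nested hab
  have hD := h.gadget_orient_ne_zero hab (gadget_adj_inl_inr b j) (gadget_adj_inl_inr a j)
  have hc := h.mem_openTriangle_of_adj hab (gadget_adj_inl_inr b j) (gadget_adj_inl_inr a j)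
    (gadget_adj_inl_inr c k).symm (by simp) (by simp) (by simpa using hjk.symm)
    (by simpa using hca) (by simpa using hcb) (by simp) hD hk
  refine ⟨j, hc, fun m hmj => ?_⟩
  exact h.mem_openTriangle_of_adj hab (gadget_adj_inl_inr b j) (gadget_adj_inl_inr a j)
    (gadget_adj_inl_inr c m) (by simpa using hca) (by simpa using hcb) (by simp) (by simp)
    (by simp) (by simpa using hmj) hD hc

theorem gadget_not_crossingFree : ¬CrossingFree gadget pos := by
  intro h
  obtain ⟨j, h₂, hj⟩ :=
    h.gadget_exists_enclosing (a := 0) (b := 1) (c := 2) (by decide) (by decide) (by decide)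
  obtain ⟨p, h₀, hp⟩ :=
    h.gadget_exists_enclosing (a := 2) (b := 1) (c := 0) (by decide) (by decide) (by decide)
  by_cases hpj : p = j
  · subst hpj
    exact h.gadget_pos_not_mem_segment (gadget_adj_inl_inr 1 p) (by decide) (by simp)
      (mem_segment_of_mutual_mem_openTriangle h₂ h₀)
  · exact h.gadget_pos_not_mem_segment (b := .inl 1) (by decide) (by simp) (by simp)
      (mem_segment_of_mem_openTriangle_of_mem_openTriangle h₂ (hj p hpj) (hp j (Ne.symm hpj)))

end Gadget

section AffineGeometry

variable {E : Type*} [AddCommGroup E] [Module ℝ E]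

theorem AffineSubspace.mem_of_segment_subset_union {P Q : AffineSubspace ℝ E} {a b : E}
    (h : segment ℝ a b ⊆ P ∪ Q) (ha : a ∉ Q) : b ∈ P := by
  by_contra hb
  have haP : a ∈ P := (h (left_mem_segment ℝ a b)).resolve_right ha
  have hbQ : b ∈ Q := (h (right_mem_segment ℝ a b)).resolve_left hb
  -- reflecting in the midpoint of `a` and `b` swaps them
  rcases h ⟨1 / 2, 1 / 2, by norm_num, by norm_num, by norm_num, rfl⟩ with hm | hm
  · refine hb ?_
    convert P.smul_vsub_vadd_mem 2 hm haP haP using 1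
    simp only [vsub_eq_sub, vadd_eq_add]
    module
  · refine ha ?_
    convert Q.smul_vsub_vadd_mem 2 hm hbQ hbQ using 1
    simp only [vsub_eq_sub, vadd_eq_add]
    module

theorem Submodule.finrank_inf_lt_of_ne {K V : Type*} [DivisionRing K] [AddCommGroup V]
    [Module K V] [FiniteDimensional K V] {D₀ D₁ : Submodule K V} {n : ℕ} (h : D₀ ≠ D₁)
    (h₀ : Module.finrank K D₀ = n) (h₁ : Module.finrank K D₁ = n) :
    Module.finrank K ↥(D₀ ⊓ D₁) < n := by
  by_contra! hn
  exact h ((Submodule.eq_of_le_of_finrank_le inf_le_left (h₀ ▸ hn)).symm.trans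
    (Submodule.eq_of_le_of_finrank_le inf_le_right (h₁ ▸ hn)))

theorem AffineSubspace.exists_affineMap_of_finrank_direction_le_one [FiniteDimensional ℝ E]
    {A : AffineSubspace ℝ E} (hA : Module.finrank ℝ A.direction ≤ 1) {x₀ : E} (hx₀ : x₀ ∈ A) :
    ∃ g : ℝ →ᵃ[ℝ] E, (A : Set E) ⊆ range g := by
  obtain ⟨v, hv⟩ := finrank_le_one_iff.mp hA
  refine ⟨AffineMap.lineMap x₀ (x₀ + v), fun x hx => ?_⟩
  obtain ⟨t, ht⟩ := hv ⟨x - x₀, A.vsub_mem_direction hx hx₀⟩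
  refine ⟨t, ?_⟩
  have ht' : t • (v : E) = x - x₀ := congrArg Subtype.val ht
  rw [AffineMap.lineMap_apply_module]
  linear_combination (norm := module) ht'

theorem AffineSubspace.exists_affineMap_inter_subset_range [FiniteDimensional ℝ E]
    {P Q : AffineSubspace ℝ E} (hPQ : P ≠ Q) (hP : Module.finrank ℝ P.direction = 2)
    (hQ : Module.finrank ℝ Q.direction = 2) (hmeet : ((P : Set E) ∩ Q).Nonempty) :
    ∃ g : ℝ →ᵃ[ℝ] E, (P : Set E) ∩ Q ⊆ range g := by
  obtain ⟨x₀, hx₀P, hx₀Q⟩ := hmeet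
  have hdir : P.direction ≠ Q.direction := fun h =>
    hPQ (AffineSubspace.ext_of_direction_eq h ⟨x₀, hx₀P, hx₀Q⟩)
  have hlt := Submodule.finrank_inf_lt_of_ne hdir hP hQ
  rw [← AffineSubspace.direction_inf_of_mem hx₀P hx₀Q] at hlt
  exact AffineSubspace.exists_affineMap_of_finrank_direction_le_one (by omega)
    (A := P ⊓ Q) ⟨hx₀P, hx₀Q⟩

end AffineGeometry

theorem IsPlane.exists_affineMap {P : Set (Fin 3 → ℝ)} (hP : IsPlane P) :
    ∃ f : ℝ × ℝ →ᵃ[ℝ] (Fin 3 → ℝ), Injective f ∧ range f = P := by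
  obtain ⟨p, u, v, hli, rfl⟩ := hP
  let f : ℝ × ℝ →ᵃ[ℝ] (Fin 3 → ℝ) :=
    ((LinearMap.fst ℝ ℝ ℝ).smulRight u + (LinearMap.snd ℝ ℝ ℝ).smulRight v).toAffineMap +
      AffineMap.const ℝ (ℝ × ℝ) p
  have hf : ∀ x, f x = p + x.1 • u + x.2 • v := fun x => by
    simp only [f, AffineMap.coe_add, Pi.add_apply, LinearMap.coe_toAffineMap,
      LinearMap.add_apply, LinearMap.smulRight_apply, LinearMap.fst_apply, LinearMap.snd_apply,
      AffineMap.const_apply]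
    abel
  refine ⟨f, fun x y hxy => ?_, ?_⟩
  · rw [hf, hf] at hxy
    obtain ⟨h₁, h₂⟩ := LinearIndependent.pair_iff.mp hli (x.1 - y.1) (x.2 - y.2)
      (by rw [sub_smul, sub_smul]; linear_combination (norm := module) hxy)
    exact Prod.ext (sub_eq_zero.mp h₁) (sub_eq_zero.mp h₂)
  · ext x
    simp only [mem_range, hf, mem_ofPred_eq, Prod.exists]
    exact ⟨fun ⟨s, t, h⟩ => ⟨s, t, h.symm⟩, fun ⟨s, t, h⟩ => ⟨s, t, h.symm⟩⟩

section TwoPlanes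

variable {E : Type*} [AddCommGroup E] [Module ℝ E] {pos : Fin 3 ⊕ Fin 4 → E}

theorem CrossingFree.gadget_not_forall_mem_range (h : CrossingFree gadget pos)
    {f : ℝ × ℝ →ᵃ[ℝ] E} (hf : Injective f) : ¬∀ v, pos v ∈ range f := by
  intro hall
  obtain ⟨pos', rfl⟩ := range_subset_range_iff_exists_comp.mp (range_subset_iff.mpr hall)
  exact gadget_not_crossingFree (h.of_comp hf)

variable {P Q : AffineSubspace ℝ E} {g : ℝ →ᵃ[ℝ] E}

theorem CrossingFree.gadget_inl_mem (h : CrossingFree gadget pos) (hinj : Injective pos)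
    (hcov : ∀ ⦃a b⦄, gadget.Adj a b → segment ℝ (pos a) (pos b) ⊆ P ∪ Q)
    (hP : ¬∀ v, pos v ∈ P) (hline : (P : Set E) ∩ Q ⊆ range g) (i : Fin 3) :
    pos (.inl i) ∈ Q := by
  by_contra hi
  have nbrP : ∀ {a b}, gadget.Adj a b → pos a ∉ Q → pos b ∈ P := fun hab =>
    AffineSubspace.mem_of_segment_subset_union (hcov hab)
  have nbrQ : ∀ {a b}, gadget.Adj a b → pos a ∉ P → pos b ∈ Q := fun hab =>
    AffineSubspace.mem_of_segment_subset_union ((hcov hab).trans (union_comm _ _).subset)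
  have hu : ∀ j, pos (.inr j) ∈ P := fun j => nbrP (gadget_adj_inl_inr i j) hi
  obtain ⟨k, hk⟩ : ∃ k, pos (.inl k) ∉ P := by
    by_contra! hv
    exact hP (Sum.forall.mpr ⟨hv, hu⟩)
  have hik : i ≠ k := by
    rintro rfl
    rcases hcov (gadget_adj_inl_inr i 0) (left_mem_segment ℝ _ _) with h' | h' <;> contradiction
  obtain ⟨h1i, h1k⟩ := gadget_adj_inl_one hik fun hadj => hk (nbrP hadj hi)
  -- `v₂` and `u₁, u₂, u₃` lie in both planes
  exact h.false_of_star_of_mem_range hinj (c := .inl 1) (l := fun j => .inr j.castSucc)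
    (fun _ _ hj => Fin.castSucc_injective _ (Sum.inr_injective hj))
    (fun j => gadget_adj_inl_inr 1 _) (hline ⟨nbrP h1i.symm hi, nbrQ h1k.symm hk⟩)
    (fun j => hline ⟨hu _, nbrQ (gadget_adj_inl_inr k _) hk⟩)

theorem CrossingFree.gadget_inr_not_mem (h : CrossingFree gadget pos) (hinj : Injective pos)
    (hline : (P : Set E) ∩ Q ⊆ range g) (hv : ∀ i, pos (.inl i) ∈ (P : Set E) ∩ Q) (j : Fin 4) :
    pos (.inr j) ∉ (P : Set E) ∩ Q := fun hj =>
  h.false_of_star_of_mem_range hinj (c := .inl 1) (l := ![.inl 0, .inl 2, .inr j])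
    (gadget_star_inl_one j).1 (gadget_star_inl_one j).2 (hline (hv 1))
    (fun i => hline (by fin_cases i <;> simp [hv, hj]))

end TwoPlanes

theorem IsPlane.exists_affineSubspace_of_gadget {P : Set (Fin 3 → ℝ)} (hP : IsPlane P)
    {pos : Fin 3 ⊕ Fin 4 → Fin 3 → ℝ} (h : CrossingFree gadget pos) :
    ∃ A : AffineSubspace ℝ (Fin 3 → ℝ), (A : Set _) = P ∧
      Module.finrank ℝ A.direction = 2 ∧ ¬∀ v, pos v ∈ A := by
  obtain ⟨f, hf, hrange⟩ := hP.exists_affineMap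
  have hcoe : ((AffineSubspace.map f ⊤ : AffineSubspace ℝ _) : Set _) = range f := by
    simp [AffineSubspace.coe_map]
  refine ⟨.map f ⊤, hcoe.trans hrange, ?_, fun hall => ?_⟩
  · rw [AffineSubspace.map_direction, AffineSubspace.direction_top, Submodule.map_top,
      LinearMap.finrank_range_of_inj (f.linear_injective_iff.mpr hf)]
    simp
  · exact h.gadget_not_forall_mem_range hf fun v => hcoe ▸ hall v

/-- If the intersection line gadget has a crossing-free straight-line drawing in `ℝ³`
contained in the union of two distinct non-parallel planes, then `v₁, v₂, v₃` lie on the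
intersection line of the two planes and none of `u₁, …, u₄` lies on that line. -/
theorem stmt_15 (c : PlaneCover gadget 2)
    (hdist : c.planes 0 ≠ c.planes 1)
    (hmeet : (c.planes 0 ∩ c.planes 1).Nonempty) :
    (∀ i : Fin 3, c.pos (Sum.inl i) ∈ c.planes 0 ∩ c.planes 1) ∧
      (∀ j : Fin 4, c.pos (Sum.inr j) ∉ c.planes 0 ∩ c.planes 1) := by
  have hcf : CrossingFree gadget c.pos := c.noCross
  obtain ⟨A₀, hA₀, hdim₀, hnot₀⟩ := (c.isPlane 0).exists_affineSubspace_of_gadget hcf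
  obtain ⟨A₁, hA₁, hdim₁, hnot₁⟩ := (c.isPlane 1).exists_affineSubspace_of_gadget hcf
  have hcov : ∀ ⦃a b⦄, gadget.Adj a b → segment ℝ (c.pos a) (c.pos b) ⊆ A₀ ∪ A₁ := by
    intro a b hab x hx
    obtain ⟨i, hi⟩ := mem_iUnion.mp (c.coversE hab hx)
    fin_cases i
    exacts [Or.inl (hA₀ ▸ hi), Or.inr (hA₁ ▸ hi)]
  rw [← hA₀, ← hA₁] at hdist hmeet ⊢
  obtain ⟨g, hg⟩ := AffineSubspace.exists_affineMap_inter_subset_range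
    (fun h => hdist (congrArg _ h)) hdim₀ hdim₁ hmeet
  have hinl : ∀ i, c.pos (.inl i) ∈ (A₀ : Set _) ∩ A₁ := fun i =>
    ⟨hcf.gadget_inl_mem c.inj (fun _ _ hab => (hcov hab).trans (union_comm _ _).subset) hnot₁
      ((inter_comm _ _).subset.trans hg) i, hcf.gadget_inl_mem c.inj hcov hnot₀ hg i⟩
  exact ⟨hinl, hcf.gadget_inr_not_mem c.inj hg hinl⟩
end
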